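/- arXiv:1412.0308 — 13 statements merged into one kernel-verified Lean document; each statement's English description precedes it below -/
import Mathlib

section
/- Let G be a group, let K be a finite proper subset of G with |K| = k ≥ 2, and suppose K is a right tile of G, i.e. there is a set C ⊆ G such that the left translates cK (c ∈ C) are pairwise disjoint and their union is G. Define x : G → ℤ by x_g = k − 1 if g⁻¹ ∈ C and x_g = −1 otherwise. Then for every g ∈ G one has ∑_{s ∈ K} x_{s·g} = 0, and x is not identically zero. In particular, the system A(K) has a nontrivial bounded solution. -/
/- STATEMENT 0: If a finite proper subset `K` of a group `G` with `|K| = k ≥ 2` is a right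
tile (witnessed by `C`), then the function `x : G → ℤ` defined by `x g = k - 1` if `g⁻¹ ∈ C`
and `x g = -1` otherwise is a nontrivial (bounded) solution of the system `A(K)`. -/
open Classical in
theorem stmt_0 {G : Type*} [Group G] (K : Finset G) (k : ℕ) (hcard : K.card = k)
    (hk : 2 ≤ k) (hproper : (K : Set G) ≠ Set.univ) (C : Set G)
    (hdisj : C.PairwiseDisjoint fun c => (fun s => c * s) '' (K : Set G))
    (hcover : ⋃ c ∈ C, (fun s => c * s) '' (K : Set G) = Set.univ) :
    (∀ g : G, ∑ s ∈ K, (if (s * g)⁻¹ ∈ C then (k : ℤ) - 1 else -1) = 0) ∧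
      (fun g : G => if g⁻¹ ∈ C then (k : ℤ) - 1 else -1) ≠ (0 : G → ℤ) := by
  constructor
  · intro g
    have hmem : g⁻¹ ∈ ⋃ c ∈ C, (fun s => c * s) '' (K : Set G) := by
      rw [hcover]; trivial
    simp only [Set.mem_iUnion, Set.mem_image, Finset.mem_coe] at hmem
    obtain ⟨c, hc, s, hs, hgs⟩ := hmem
    have hcs : (s * g)⁻¹ = c := by
      rw [mul_inv_rev, ← hgs]; simp
    have key : ∀ t ∈ K, ((t * g)⁻¹ ∈ C ↔ t = s) := by
      intro t ht
      constructor
      · intro hC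
        have h1 : g⁻¹ ∈ (fun s => (t * g)⁻¹ * s) '' (K : Set G) :=
          ⟨t, ht, by simp [mul_assoc]⟩
        have h2 : g⁻¹ ∈ (fun s => c * s) '' (K : Set G) := ⟨s, hs, hgs⟩
        have hceq : (t * g)⁻¹ = c :=
          hdisj.elim hC hc (Set.not_disjoint_iff.mpr ⟨g⁻¹, h1, h2⟩)
        have : c * t = c * s := by
          have h3 : (t * g)⁻¹ * t = g⁻¹ := by group
          rw [← hceq, h3, hceq]
          exact hgs.symm
        exact mul_left_cancel this
      · rintro rfl
        rw [hcs]; exact hc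
    calc ∑ t ∈ K, (if (t * g)⁻¹ ∈ C then (k : ℤ) - 1 else -1)
        = ∑ t ∈ K, ((if t = s then (k : ℤ) else 0) - 1) := by
          refine Finset.sum_congr rfl fun t ht => ?_
          rw [key t ht]
          by_cases h : t = s <;> simp [h]
      _ = 0 := by
          rw [Finset.sum_sub_distrib, Finset.sum_ite_eq' K s (fun _ => (k : ℤ))]
          simp [hs, hcard]
  · intro h
    have := congrFun h 1
    simp only [Pi.zero_apply] at this
    split at this <;> omega
end

section
/- Let α_1, …, α_t be distinct nonzero complex numbers and b_1, …, b_t complex numbers, and define x : ℤ → ℂ by x_n = ∑_{j=1}^t b_j α_j^n. Then the function x is bounded (i.e. there is M ∈ ℝ with |x_n| ≤ M for all n ∈ ℤ) if and only if b_j = 0 for every index j such that |α_j| ≠ 1. -/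
/-! If `b j = 0` whenever `|α j| ≠ 1`, every surviving term has modulus `|b j|`.
Conversely, the coefficient vector `(b i * α i ^ m)ᵢ` times the Vandermonde matrix of the
`α i` is the window `(x (m + k))ₖ`; as this matrix is invertible, each `b j * α j ^ m` is a
fixed linear combination of values of `x`, hence bounded in `m ∈ ℤ`, which forces `b j = 0`
whenever `|α j| ≠ 1`. -/

section

open Matrix

theorem eq_vecMul_vandermonde_vecMul_inv {K : Type*} [Field K] {t : ℕ} {α : Fin t → K}
    (hinj : Function.Injective α) (c : Fin t → K) :
    c = (c ᵥ* vandermonde α) ᵥ* (vandermonde α)⁻¹ := by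
  have hdet : IsUnit (vandermonde α).det :=
    isUnit_iff_ne_zero.2 (det_vandermonde_ne_zero_iff.2 hinj)
  rw [vecMul_vecMul, mul_nonsing_inv _ hdet, vecMul_one]

theorem vecMul_vandermonde_mul_zpow {K : Type*} [Field K] {t : ℕ} {α : Fin t → K}
    (hα : ∀ i, α i ≠ 0) (b : Fin t → K) (m : ℤ) (k : Fin t) :
    ((fun i => b i * α i ^ m) ᵥ* vandermonde α) k = ∑ i, b i * α i ^ (m + (k : ℕ)) := by
  simp only [vecMul, dotProduct, vandermonde_apply]
  refine Finset.sum_congr rfl fun i _ => ?_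
  rw [zpow_add₀ (hα i), zpow_natCast, mul_assoc]

theorem exists_forall_norm_mul_zpow_le {𝕜 : Type*} [NormedField 𝕜] {t : ℕ} {α : Fin t → 𝕜}
    (hinj : Function.Injective α) (hα : ∀ i, α i ≠ 0) (b : Fin t → 𝕜) {M : ℝ}
    (hM : ∀ n : ℤ, ‖∑ i, b i * α i ^ n‖ ≤ M) (j : Fin t) :
    ∃ C : ℝ, ∀ m : ℤ, ‖b j * α j ^ m‖ ≤ C := by
  refine ⟨∑ k, M * ‖(vandermonde α)⁻¹ k j‖, fun m => ?_⟩
  calc ‖b j * α j ^ m‖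
      = ‖∑ k : Fin t, (∑ i, b i * α i ^ (m + (k : ℕ))) * (vandermonde α)⁻¹ k j‖ := by
        rw [congrFun (eq_vecMul_vandermonde_vecMul_inv hinj fun i => b i * α i ^ m) j,
          vecMul, dotProduct]
        simp only [vecMul_vandermonde_mul_zpow hα]
    _ ≤ ∑ k : Fin t, ‖(∑ i, b i * α i ^ (m + (k : ℕ))) * (vandermonde α)⁻¹ k j‖ :=
        norm_sum_le _ _
    _ ≤ ∑ k, M * ‖(vandermonde α)⁻¹ k j‖ := by
        gcongr with k
        rw [norm_mul]
        exact mul_le_mul_of_nonneg_right (hM _) (norm_nonneg _)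

end

theorem eq_zero_of_forall_norm_mul_zpow_le {𝕜 : Type*} [NormedDivisionRing 𝕜] {a z : 𝕜}
    (hz₀ : z ≠ 0) (hz : ‖z‖ ≠ 1) {C : ℝ} (h : ∀ m : ℤ, ‖a * z ^ m‖ ≤ C) : a = 0 := by
  by_contra ha
  have hr : 0 < ‖z‖ := norm_pos_iff.2 hz₀
  obtain ⟨k, hk⟩ : ∃ k : ℤ, 1 < ‖z‖ ^ k := by
    rcases hz.lt_or_gt with hlt | hgt
    · exact ⟨-1, by simpa using (one_lt_inv₀ hr).2 hlt⟩
    · exact ⟨1, by simpa using hgt⟩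
  obtain ⟨n, hn⟩ := pow_unbounded_of_one_lt (C / ‖a‖) hk
  have hle := h (k * n)
  rw [norm_mul, norm_zpow, zpow_mul, zpow_natCast] at hle
  rw [div_lt_iff₀ (norm_pos_iff.2 ha)] at hn
  linarith

theorem norm_sum_mul_zpow_le {𝕜 : Type*} [NormedDivisionRing 𝕜] {t : ℕ} {α b : Fin t → 𝕜}
    (h : ∀ j, ‖α j‖ ≠ 1 → b j = 0) (n : ℤ) :
    ‖∑ j, b j * α j ^ n‖ ≤ ∑ j, ‖b j‖ := by
  refine (norm_sum_le _ _).trans (Finset.sum_le_sum fun j _ => ?_)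
  rw [norm_mul, norm_zpow]
  by_cases hj : ‖α j‖ = 1
  · rw [hj, one_zpow, mul_one]
  · simp [h j hj]

theorem stmt_1 (t : ℕ) (α : Fin t → ℂ) (hinj : Function.Injective α)
    (hα : ∀ j, α j ≠ 0) (b : Fin t → ℂ) :
    (∃ M : ℝ, ∀ n : ℤ, ‖∑ j, b j * α j ^ n‖ ≤ M) ↔
      ∀ j, ‖α j‖ ≠ 1 → b j = 0 := by
  refine ⟨fun ⟨M, hM⟩ j hj => ?_, fun h => ⟨_, norm_sum_mul_zpow_le h⟩⟩
  obtain ⟨C, hC⟩ := exists_forall_norm_mul_zpow_le hinj hα b hM j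
  exact eq_zero_of_forall_norm_mul_zpow_le (hα j) hj hC
end

section
/- Let K be a finite set of nonnegative integers with 0 ∈ K and |K| ≥ 2 whose elements have greatest common divisor 1. Then K is b-arithmetic in ℤ (i.e. the system A(K) has a nontrivial bounded complex solution) if and only if the mask polynomial P_K(X) = ∑_{s ∈ K} X^s has a complex root of modulus 1. -/
/-!
The system `A(K)` says `P_K(S) x = 0`, where `S` is the shift `(S x)_n = x_{n+1}`. Over `ℂ`,
`P_K(S) = c ∏ (S - a)` over the roots `a` of `P_K`. The kernel of `S - a` consists of the
geometric sequences `x_n = a ^ n x_0`, which are unbounded unless zero when `‖a‖ ≠ 1`; since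
`S - a` also preserves boundedness, peeling off the factors one at a time shows that a bounded
solution vanishes when no root lies on the unit circle. Conversely, a root `z` with `‖z‖ = 1`
gives the bounded solution `x_n = z ^ n`.
-/

open Polynomial Filter

namespace IntSeq

variable {𝕜 : Type*} [NormedField 𝕜]

def IsBounded (x : ℤ → 𝕜) : Prop := ∃ M : ℝ, ∀ n, ‖x n‖ ≤ M

variable (𝕜) in
def shift : Module.End 𝕜 (ℤ → 𝕜) where
  toFun x n := x (n + 1)
  map_add' _ _ := rfl
  map_smul' _ _ := rfl

@[simp]
theorem shift_apply (x : ℤ → 𝕜) (n : ℤ) : shift 𝕜 x n = x (n + 1) := rfl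

theorem shift_pow_apply (k : ℕ) (x : ℤ → 𝕜) (n : ℤ) : (shift 𝕜 ^ k) x n = x (n + k) := by
  induction k generalizing n with
  | zero => simp
  | succ k ih =>
    rw [pow_succ', Module.End.mul_apply, shift_apply, ih]
    push_cast
    ring_nf

theorem aeval_shift_X_sub_C_apply (a : 𝕜) (x : ℤ → 𝕜) (n : ℤ) :
    aeval (shift 𝕜) (X - C a) x n = x (n + 1) - a * x n := by
  simp

theorem IsBounded.aeval_shift {x : ℤ → 𝕜} (hx : IsBounded x) (p : 𝕜[X]) :
    IsBounded (aeval (shift 𝕜) p x) := by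
  obtain ⟨M, hM⟩ := hx
  induction p using Polynomial.induction_on' with
  | add p q hp hq =>
    obtain ⟨Mp, hp⟩ := hp
    obtain ⟨Mq, hq⟩ := hq
    refine ⟨Mp + Mq, fun n => ?_⟩
    rw [map_add, LinearMap.add_apply, Pi.add_apply]
    exact (norm_add_le _ _).trans (add_le_add (hp n) (hq n))
  | monomial k a =>
    refine ⟨‖a‖ * M, fun n => ?_⟩
    simpa [aeval_monomial, shift_pow_apply] using
      mul_le_mul_of_nonneg_left (hM (n + k)) (norm_nonneg a)

theorem apply_add_eq_pow_mul {x : ℤ → 𝕜} {a : 𝕜} (h : ∀ n, x (n + 1) = a * x n)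
    (k : ℕ) (n : ℤ) : x (n + k) = a ^ k * x n := by
  induction k with
  | zero => simp
  | succ k ih =>
    rw [Nat.cast_succ, ← add_assoc, h, ih, pow_succ']
    ring

theorem IsBounded.eq_zero_of_geometric {x : ℤ → 𝕜} (hx : IsBounded x) {a : 𝕜} (ha : ‖a‖ ≠ 1)
    (h : ∀ n, x (n + 1) = a * x n) : x = 0 := by
  obtain ⟨M, hM⟩ := hx
  funext n
  rw [Pi.zero_apply, ← norm_le_zero_iff]
  rcases ha.lt_or_gt with ha | ha
  · have hle : ∀ k : ℕ, ‖x n‖ ≤ ‖a‖ ^ k * M := fun k => by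
      have hxn := apply_add_eq_pow_mul h k (n - k)
      rw [sub_add_cancel] at hxn
      rw [hxn, norm_mul, norm_pow]
      exact mul_le_mul_of_nonneg_left (hM (n - k)) (pow_nonneg (norm_nonneg a) k)
    have hlim : Tendsto (fun k : ℕ => ‖a‖ ^ k * M) atTop (nhds 0) := by
      simpa using (tendsto_pow_atTop_nhds_zero_of_lt_one (norm_nonneg a) ha).mul_const M
    exact ge_of_tendsto' hlim hle
  · by_contra! hpos
    have hlim : Tendsto (fun k : ℕ => ‖a‖ ^ k * ‖x n‖) atTop atTop :=
      (tendsto_pow_atTop_atTop_of_one_lt ha).atTop_mul_const hpos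
    obtain ⟨k, hk⟩ := (hlim.eventually_gt_atTop M).exists
    have := hM (n + k)
    rw [apply_add_eq_pow_mul h, norm_mul, norm_pow] at this
    linarith

theorem IsBounded.eq_zero_of_aeval_shift_prod {x : ℤ → 𝕜} (hx : IsBounded x) (m : Multiset 𝕜)
    (hm : ∀ a ∈ m, ‖a‖ ≠ 1) (h : aeval (shift 𝕜) (m.map fun a => X - C a).prod x = 0) :
    x = 0 := by
  induction m using Multiset.induction_on generalizing x with
  | empty => simpa using h
  | cons a m ih =>
    have hy : aeval (shift 𝕜) (X - C a) x = 0 := by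
      refine ih (hx.aeval_shift _) (fun b hb => hm b (Multiset.mem_cons_of_mem hb)) ?_
      rwa [Multiset.map_cons, Multiset.prod_cons, mul_comm, map_mul] at h
    refine hx.eq_zero_of_geometric (hm a (Multiset.mem_cons_self a m)) fun n => ?_
    have := congr_fun hy n
    rwa [aeval_shift_X_sub_C_apply, Pi.zero_apply, sub_eq_zero] at this

theorem IsBounded.eq_zero_of_aeval_shift [IsAlgClosed 𝕜] {x : ℤ → 𝕜} (hx : IsBounded x)
    {p : 𝕜[X]} (hp : p ≠ 0) (hroots : ∀ a ∈ p.roots, ‖a‖ ≠ 1) (h : aeval (shift 𝕜) p x = 0) :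
    x = 0 := by
  refine hx.eq_zero_of_aeval_shift_prod p.roots hroots ?_
  rw [(IsAlgClosed.splits p).eq_prod_roots, map_mul, aeval_C, Module.End.mul_apply,
    Module.algebraMap_end_apply] at h
  exact (smul_eq_zero.mp h).resolve_left (leadingCoeff_ne_zero.mpr hp)

noncomputable def maskPoly (R : Type*) [Semiring R] (K : Finset ℕ) : R[X] := ∑ s ∈ K, X ^ s

section maskPoly

variable {R : Type*} [Semiring R] {K : Finset ℕ}

theorem eval_maskPoly (z : R) : (maskPoly R K).eval z = ∑ s ∈ K, z ^ s := by
  simp [maskPoly, eval_finsetSum, eval_X_pow]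

theorem maskPoly_ne_zero [Nontrivial R] (hK : K.Nonempty) : maskPoly R K ≠ 0 := by
  obtain ⟨s, hs⟩ := hK
  intro h
  simpa [maskPoly, finsetSum_coeff, coeff_X_pow, hs] using congr_arg (coeff · s) h

end maskPoly

theorem aeval_shift_maskPoly_apply (K : Finset ℕ) (x : ℤ → 𝕜) (n : ℤ) :
    aeval (shift 𝕜) (maskPoly 𝕜 K) x n = ∑ s ∈ K, x (n + s) := by
  simp [maskPoly, Finset.sum_apply, shift_pow_apply]

end IntSeq

open IntSeq

theorem stmt_2_general (K : Finset ℕ) (h0 : 0 ∈ K) :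
    (∃ x : ℤ → ℂ, x ≠ 0 ∧ (∃ M : ℝ, ∀ n : ℤ, ‖x n‖ ≤ M) ∧
        ∀ n : ℤ, ∑ s ∈ K, x (n + (s : ℤ)) = 0) ↔
      ∃ z : ℂ, ‖z‖ = 1 ∧ ∑ s ∈ K, z ^ s = 0 := by
  constructor
  · rintro ⟨x, hx0, hxb, hx⟩
    by_contra! hroot
    refine hx0 (IsBounded.eq_zero_of_aeval_shift hxb (maskPoly_ne_zero ⟨0, h0⟩)
      (fun z hz hz1 => hroot z hz1 ?_) ?_)
    · rw [← eval_maskPoly]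
      exact isRoot_of_mem_roots hz
    · ext n
      rw [aeval_shift_maskPoly_apply, hx n, Pi.zero_apply]
  · rintro ⟨z, hz1, hz⟩
    have hz0 : z ≠ 0 := by
      rintro rfl
      simp at hz1
    refine ⟨fun n => z ^ n, fun h => by simpa [hz0] using congr_fun h 0,
      ⟨1, fun n => by simp [hz1]⟩, fun n => ?_⟩
    simp_rw [zpow_add₀ hz0, zpow_natCast, ← Finset.mul_sum, hz, mul_zero]

theorem stmt_2 (K : Finset ℕ) (h0 : 0 ∈ K) (hcard : 2 ≤ K.card) (hgcd : K.gcd id = 1) :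
    (∃ x : ℤ → ℂ, x ≠ 0 ∧ (∃ M : ℝ, ∀ n : ℤ, ‖x n‖ ≤ M) ∧
        ∀ n : ℤ, ∑ s ∈ K, x (n + (s : ℤ)) = 0) ↔
      ∃ z : ℂ, ‖z‖ = 1 ∧ ∑ s ∈ K, z ^ s = 0 :=
  stmt_2_general K h0
end

section
/- Let K be a finite set of nonnegative integers with 0 ∈ K, |K| = k ≥ 2, whose elements have greatest common divisor 1. The following are equivalent: (a) the system A(K) has a nontrivial periodic complex solution; (b) there exists an integer n > k and a nonzero function x : ℤ/nℤ → ℂ such that ∑_{s ∈ K} x(g + s̄) = 0 for every g ∈ ℤ/nℤ (where s̄ is the image of s in ℤ/nℤ); (c) there exists an integer m ≥ 2 such that the m-th cyclotomic polynomial Φ_m(X) divides the mask polynomial P_K(X) = ∑_{s ∈ K} X^s in ℤ[X]; (d) the system A(K) has a nontrivial periodic solution taking values in ℤ. -/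
/-!
Descending a periodic solution of period `p` to `ℤ/pℤ` and taking the discrete Fourier
transform, a nonzero solution produces a root of unity `ζ` with `P_K(ζ) = 0`; `ζ ≠ 1` since
`P_K(1) = |K|`, so the minimal polynomial `Φ_m` of `ζ` (with `m = ord ζ ≥ 2`) divides `P_K`.
Conversely, if `Φ_m ∣ P_K` then `θ = X mod Φ_m` is a unit of `ℤ[X]/(Φ_m)` with `θ ^ m = 1` and
`P_K(θ) = 0`, so `n ↦ φ(θ ^ n)` is an integral `m`-periodic solution for any `ℤ`-linear `φ`
with `φ 1 ≠ 0`.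
-/

open Polynomial
open scoped ZMod

/-- `x` solves the system `A(K)` over `G` (here `ℤ` or `ℤ/nℤ`). -/
def IsMaskSolution {G R : Type*} [AddGroupWithOne G] [AddCommMonoid R] (K : Finset ℕ)
    (x : G → R) : Prop :=
  ∀ g, ∑ s ∈ K, x (g + s) = 0

def HasPeriodicMaskSolution (K : Finset ℕ) (R : Type*) [AddCommMonoid R] : Prop :=
  ∃ x : ℤ → R, x ≠ 0 ∧ (∃ p : ℤ, 1 ≤ p ∧ Function.Periodic x p) ∧ IsMaskSolution K x

variable {K : Finset ℕ} {R : Type*} [AddCommMonoid R]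

theorem isMaskSolution_comp_intCast_iff {n : ℕ} {y : ZMod n → R} :
    IsMaskSolution K (y ∘ ((↑) : ℤ → ZMod n)) ↔ IsMaskSolution K y := by
  refine ⟨fun h g ↦ ?_, fun h a ↦ by simpa using h a⟩
  obtain ⟨a, rfl⟩ := ZMod.intCast_surjective g
  simpa using h a

theorem Function.Periodic.exists_eq_comp_intCast {α : Type*} {x : ℤ → α} {p : ℕ}
    (h : Function.Periodic x p) : ∃ y : ZMod p → α, x = y ∘ ((↑) : ℤ → ZMod p) := by
  refine ⟨fun g ↦ x (g.cast : ℤ), funext fun a ↦ ?_⟩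
  simp only [Function.comp_apply, ZMod.coe_intCast, Int.emod_def]
  rw [mul_comm]
  exact (h.sub_int_mul_eq _).symm

theorem HasPeriodicMaskSolution.exists_zmod (h : HasPeriodicMaskSolution K R) (N : ℕ) :
    ∃ n : ℕ, N < n ∧ ∃ y : ZMod n → R, y ≠ 0 ∧ IsMaskSolution K y := by
  obtain ⟨x, hx0, ⟨p, hp, hper⟩, hsol⟩ := h
  lift p to ℕ using by omega
  obtain ⟨y, rfl⟩ := (by exact_mod_cast hper.nat_mul (N + 1) :
    Function.Periodic x ((N + 1) * p : ℕ)).exists_eq_comp_intCast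
  refine ⟨(N + 1) * p, by nlinarith, y, ?_, isMaskSolution_comp_intCast_iff.mp hsol⟩
  rintro rfl
  exact hx0 rfl

theorem HasPeriodicMaskSolution.map {S : Type*} [AddCommMonoid S]
    (h : HasPeriodicMaskSolution K R) (f : R →+ S) (hf : Function.Injective f) :
    HasPeriodicMaskSolution K S := by
  obtain ⟨x, hx0, ⟨p, hp, hper⟩, hsol⟩ := h
  refine ⟨f ∘ x, ?_, ⟨p, hp, fun n ↦ congrArg f (hper n)⟩, fun n ↦ ?_⟩
  · exact fun h ↦ hx0 (funext fun n ↦ hf (by simpa using congrFun h n))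
  · simp [← map_sum, hsol n]

theorem hasPeriodicMaskSolution_int_of_unit {A : Type*} [CommRing A] [Nontrivial A]
    [Module.Projective ℤ A] (u : Aˣ) {m : ℕ} (hm : 0 < m) (hu : u ^ m = 1)
    (hK : ∑ s ∈ K, (u : A) ^ s = 0) : HasPeriodicMaskSolution K ℤ := by
  obtain ⟨φ, hφ⟩ : ∃ φ : Module.Dual ℤ A, φ 1 ≠ 0 := by
    by_contra! h
    exact one_ne_zero ((Module.forall_dual_apply_eq_zero_iff ℤ (1 : A)).mp h)
  refine ⟨fun n ↦ φ ((u ^ n : Aˣ) : A), fun h ↦ hφ (by simpa using congrFun h 0),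
    ⟨m, by exact_mod_cast hm, fun n ↦ by simp [zpow_add, hu]⟩, fun n ↦ ?_⟩
  simp only [zpow_add, zpow_natCast, Units.val_mul, Units.val_pow_eq_pow_val, ← map_sum,
    ← Finset.mul_sum, hK, mul_zero, map_zero]

theorem hasPeriodicMaskSolution_int_of_cyclotomic_dvd {m : ℕ} (hm : 0 < m)
    (h : cyclotomic m ℤ ∣ ∑ s ∈ K, X ^ s) : HasPeriodicMaskSolution K ℤ := by
  have hΦ := cyclotomic.monic m ℤ
  have := hΦ.free_adjoinRoot
  have := AdjoinRoot.nontrivial (cyclotomic m ℤ) (degree_cyclotomic_pos m ℤ hm).ne'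
  have hθ : AdjoinRoot.root (cyclotomic m ℤ) ^ m = 1 := by
    rw [← sub_eq_zero, ← AdjoinRoot.mk_X, ← map_pow, ← map_one (AdjoinRoot.mk _), ← map_sub,
      AdjoinRoot.mk_eq_zero]
    exact cyclotomic.dvd_X_pow_sub_one m ℤ
  refine hasPeriodicMaskSolution_int_of_unit (Units.ofPowEqOne _ m hθ hm.ne') hm
    (Units.pow_ofPowEqOne _ _) ?_
  simpa [← AdjoinRoot.mk_X, ← map_pow, ← map_sum] using AdjoinRoot.mk_eq_zero.mpr h

theorem ZMod.dft_comp_add_right {n : ℕ} [NeZero n] (y : ZMod n → ℂ) (s k : ZMod n) :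
    𝓕 (fun g ↦ y (g + s)) k = ZMod.stdAddChar (s * k) * 𝓕 y k := by
  rw [ZMod.dft_apply, ZMod.dft_apply, Finset.mul_sum,
    ← Equiv.sum_comp (Equiv.subRight s) (fun j ↦ ZMod.stdAddChar (-(j * k)) • y (j + s))]
  refine Finset.sum_congr rfl fun g _ ↦ ?_
  simp only [Equiv.subRight_apply, sub_add_cancel, smul_eq_mul]
  rw [show -((g - s) * k) = s * k + -(g * k) by ring, AddChar.map_add_eq_mul, mul_assoc]

theorem IsMaskSolution.exists_pow_eq_one_sum_pow_eq_zero {n : ℕ} [NeZero n] {y : ZMod n → ℂ}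
    (hsol : IsMaskSolution K y) (hy : y ≠ 0) :
    ∃ ζ : ℂ, ζ ^ n = 1 ∧ ∑ s ∈ K, ζ ^ s = 0 := by
  obtain ⟨k, hk⟩ := Function.ne_iff.mp ((LinearEquiv.map_ne_zero_iff (𝓕 : _ ≃ₗ[ℂ] _)).mpr hy)
  have hpow (s : ℕ) : ZMod.stdAddChar ((s : ZMod n) * k) = ZMod.stdAddChar k ^ s := by
    rw [← nsmul_eq_mul, AddChar.map_nsmul_eq_pow]
  refine ⟨ZMod.stdAddChar k, by rw [← AddChar.map_nsmul_eq_pow]; simp, ?_⟩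
  have hshifts : ∑ s ∈ K, (fun g : ZMod n ↦ y (g + s)) = 0 := funext fun g ↦ by simpa using hsol g
  have := congrFun (congrArg 𝓕 hshifts) k
  simp only [map_sum, Finset.sum_apply, ZMod.dft_comp_add_right, map_zero, Pi.zero_apply,
    ← Finset.sum_mul, hpow] at this
  exact (mul_eq_zero.mp this).resolve_right hk

theorem exists_cyclotomic_dvd_of_aeval_eq_zero {F : Type*} [Field F] [CharZero F] {ζ : F}
    {n : ℕ} (hn : n ≠ 0) (hζn : ζ ^ n = 1) (hζ1 : ζ ≠ 1) {P : ℤ[X]} (hP : aeval ζ P = 0) :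
    ∃ m : ℕ, 2 ≤ m ∧ cyclotomic m ℤ ∣ P := by
  have hpos : 0 < orderOf ζ := orderOf_pos_iff.mpr (isOfFinOrder_iff_pow_eq_one.mpr
    ⟨n, Nat.pos_of_ne_zero hn, hζn⟩)
  have hne : orderOf ζ ≠ 1 := fun h ↦ hζ1 (orderOf_eq_one_iff.mp h)
  have hprim := IsPrimitiveRoot.orderOf ζ
  refine ⟨orderOf ζ, by omega, ?_⟩
  rw [cyclotomic_eq_minpoly hprim hpos]
  exact minpoly.isIntegrallyClosed_dvd (hprim.isIntegral hpos) hP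

theorem IsMaskSolution.exists_cyclotomic_dvd {n : ℕ} [NeZero n] {y : ZMod n → ℂ}
    (hsol : IsMaskSolution K y) (hy : y ≠ 0) (hK : K.Nonempty) :
    ∃ m : ℕ, 2 ≤ m ∧ cyclotomic m ℤ ∣ ∑ s ∈ K, X ^ s := by
  obtain ⟨ζ, hζn, hζK⟩ := hsol.exists_pow_eq_one_sum_pow_eq_zero hy
  have hζ1 : ζ ≠ 1 := by
    rintro rfl
    simp [hK.ne_empty] at hζK
  exact exists_cyclotomic_dvd_of_aeval_eq_zero (NeZero.ne n) hζn hζ1 (by simpa using hζK)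

theorem stmt_3_general (K : Finset ℕ) (h0 : 0 ∈ K) (k : ℕ) :
    List.TFAE
      [ ∃ x : ℤ → ℂ, x ≠ 0 ∧ (∃ p : ℤ, 1 ≤ p ∧ ∀ n : ℤ, x (n + p) = x n) ∧
          ∀ n : ℤ, ∑ s ∈ K, x (n + (s : ℤ)) = 0,
        ∃ n : ℕ, k < n ∧ ∃ x : ZMod n → ℂ, x ≠ 0 ∧
          ∀ g : ZMod n, ∑ s ∈ K, x (g + (s : ZMod n)) = 0,
        ∃ m : ℕ, 2 ≤ m ∧ Polynomial.cyclotomic m ℤ ∣ ∑ s ∈ K, Polynomial.X ^ s,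
        ∃ x : ℤ → ℤ, x ≠ 0 ∧ (∃ p : ℤ, 1 ≤ p ∧ ∀ n : ℤ, x (n + p) = x n) ∧
          ∀ n : ℤ, ∑ s ∈ K, x (n + (s : ℤ)) = 0 ] := by
  tfae_have 1 → 2 := fun h ↦ HasPeriodicMaskSolution.exists_zmod h k
  tfae_have 2 → 3 := fun ⟨n, hkn, y, hy, hsol⟩ ↦
    have : NeZero n := ⟨by omega⟩
    IsMaskSolution.exists_cyclotomic_dvd hsol hy ⟨0, h0⟩
  tfae_have 3 → 4 := fun ⟨m, hm, hdvd⟩ ↦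
    hasPeriodicMaskSolution_int_of_cyclotomic_dvd (by omega) hdvd
  tfae_have 4 → 1 := fun h ↦
    HasPeriodicMaskSolution.map h (Int.castAddHom ℂ) Int.cast_injective
  tfae_finish

theorem stmt_3 (K : Finset ℕ) (h0 : 0 ∈ K) (k : ℕ) (hcard : K.card = k) (hk : 2 ≤ k)
    (hgcd : K.gcd id = 1) :
    List.TFAE
      [ ∃ x : ℤ → ℂ, x ≠ 0 ∧ (∃ p : ℤ, 1 ≤ p ∧ ∀ n : ℤ, x (n + p) = x n) ∧
          ∀ n : ℤ, ∑ s ∈ K, x (n + (s : ℤ)) = 0,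
        ∃ n : ℕ, k < n ∧ ∃ x : ZMod n → ℂ, x ≠ 0 ∧
          ∀ g : ZMod n, ∑ s ∈ K, x (g + (s : ZMod n)) = 0,
        ∃ m : ℕ, 2 ≤ m ∧ Polynomial.cyclotomic m ℤ ∣ ∑ s ∈ K, Polynomial.X ^ s,
        ∃ x : ℤ → ℤ, x ≠ 0 ∧ (∃ p : ℤ, 1 ≤ p ∧ ∀ n : ℤ, x (n + p) = x n) ∧
          ∀ n : ℤ, ∑ s ∈ K, x (n + (s : ℤ)) = 0 ] :=
  stmt_3_general K h0 k
end

section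
/- Let a and b be integers with 0 < a < b and gcd(a, b) = 1. Then there exists a complex number ξ with |ξ| = 1 and 1 + ξ^a + ξ^b = 0 if and only if a and b are, in some order, congruent to 1 and 2 modulo 3 (i.e. either a ≡ 1 and b ≡ 2 (mod 3), or a ≡ 2 and b ≡ 1 (mod 3)). -/
/-! If `‖ξ‖ = 1` and `1 + ξ ^ a + ξ ^ b = 0`, then `u = ξ ^ a` and `v = ξ ^ b` are unit complex
numbers with `1 + u + v = 0`; conjugating shows `u * v = 1`, so both are roots of `X² + X + 1`.
Hence `ξ ^ (3a) = ξ ^ (3b) = 1`, and coprimality gives `ξ ^ 3 = 1` with `ξ ≠ 1`: `ξ` is a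
primitive cube root of unity `ω`. Since `ω ^ n` depends only on `n mod 3`, checking the nine
residue pairs shows `1 + ω ^ a + ω ^ b = 0` exactly when `{a, b} ≡ {1, 2} (mod 3)`. -/

theorem sq_add_self_add_one_eq_zero_of_norm_eq_one {u v : ℂ} (hu : ‖u‖ = 1) (hv : ‖v‖ = 1)
    (h : 1 + u + v = 0) : u ^ 2 + u + 1 = 0 := by
  have mul_conj_eq_one {z : ℂ} (hz : ‖z‖ = 1) : z * starRingEnd ℂ z = 1 := by
    rw [Complex.mul_conj, Complex.normSq_eq_norm_sq, hz]; norm_num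
  have hconj : 1 + starRingEnd ℂ u + starRingEnd ℂ v = 0 := by
    simpa using congrArg (starRingEnd ℂ) h
  -- Conjugating gives `1 + u⁻¹ + v⁻¹ = 0`, i.e. `u + v + u * v = 0`, hence `u * v = 1`.
  have huv : u * v = 1 := by
    linear_combination u * v * hconj - v * mul_conj_eq_one hu - u * mul_conj_eq_one hv - h
  linear_combination u * h - huv

theorem one_add_pow_add_pow_eq_zero_iff {R : Type*} [CommRing R] {ω : R} (h3 : (3 : R) ≠ 0)
    (hω : ω ^ 2 + ω + 1 = 0) (a b : ℕ) :
    1 + ω ^ a + ω ^ b = 0 ↔ (a % 3 = 1 ∧ b % 3 = 2) ∨ (a % 3 = 2 ∧ b % 3 = 1) := by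
  have hω3 : ω ^ 3 = 1 := by linear_combination (ω - 1) * hω
  rw [pow_eq_pow_mod a hω3, pow_eq_pow_mod b hω3]
  have ha : a % 3 < 3 := Nat.mod_lt _ (by norm_num)
  have hb : b % 3 < 3 := Nat.mod_lt _ (by norm_num)
  -- In each of the seven excluded cases, `3` lies in the ideal spanned by the two relations.
  interval_cases a % 3 <;> interval_cases b % 3 <;> grind

theorem stmt_5_general (a b : ℕ) (hgcd : Nat.gcd a b = 1) :
    (∃ ξ : ℂ, ‖ξ‖ = 1 ∧ 1 + ξ ^ a + ξ ^ b = 0) ↔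
      ((a % 3 = 1 ∧ b % 3 = 2) ∨ (a % 3 = 2 ∧ b % 3 = 1)) := by
  constructor
  · rintro ⟨ξ, hξ, h⟩
    have hnorm (n : ℕ) : ‖ξ ^ n‖ = 1 := by rw [norm_pow, hξ, one_pow]
    have hua := sq_add_self_add_one_eq_zero_of_norm_eq_one (hnorm a) (hnorm b) h
    have hub := sq_add_self_add_one_eq_zero_of_norm_eq_one (hnorm b) (hnorm a)
      (by linear_combination h)
    have hξ3 : ξ ^ 3 = 1 := by
      rw [← mul_one 3, ← hgcd, ← Nat.gcd_mul_left, pow_gcd_eq_one, mul_comm 3 a, mul_comm 3 b,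
        pow_mul, pow_mul]
      exact ⟨by linear_combination (ξ ^ a - 1) * hua, by linear_combination (ξ ^ b - 1) * hub⟩
    have hξ_sub_one : ξ - 1 ≠ 0 := by
      rintro hξ_sub_one
      rw [sub_eq_zero.mp hξ_sub_one] at h
      norm_num at h
    have hfactor : (ξ - 1) * (ξ ^ 2 + ξ + 1) = 0 := by linear_combination hξ3
    have hω : ξ ^ 2 + ξ + 1 = 0 := (mul_eq_zero.mp hfactor).resolve_left hξ_sub_one
    exact (one_add_pow_add_pow_eq_zero_iff three_ne_zero hω a b).mp h
  · intro hmod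
    have hω := Complex.isPrimitiveRoot_exp 3 three_ne_zero
    have hsum := hω.geom_sum_eq_zero (by norm_num)
    rw [Finset.sum_range_succ, Finset.sum_range_succ, Finset.sum_range_one] at hsum
    exact ⟨_, hω.norm'_eq_one three_ne_zero,
      (one_add_pow_add_pow_eq_zero_iff three_ne_zero (by linear_combination hsum) a b).mpr hmod⟩

theorem stmt_5 (a b : ℕ) (ha : 0 < a) (hab : a < b) (hgcd : Nat.gcd a b = 1) :
    (∃ ξ : ℂ, ‖ξ‖ = 1 ∧ 1 + ξ ^ a + ξ ^ b = 0) ↔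
      ((a % 3 = 1 ∧ b % 3 = 2) ∨ (a % 3 = 2 ∧ b % 3 = 1)) :=
  stmt_5_general a b hgcd
end

section
/- Let a and b be integers with 0 < a < b and gcd(a, b) = 1, and let K = {0, a, b}. The following are equivalent: (a) K is b-arithmetic in ℤ, i.e. the system A(K) has a nontrivial bounded complex solution; (b) the system A(K) has a nontrivial periodic solution taking values in ℤ; (c) there exists an integer n > 3 and a nonzero function x : ℤ/nℤ → ℂ such that ∑_{s ∈ K} x(g + s̄) = 0 for every g ∈ ℤ/nℤ. -/
/-!
Bounded solutions of `x n + x (n + a) + x (n + b) = 0` form a finite-dimensional space, since a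
solution is determined by `b` consecutive values, and the shift acts on it. A nontrivial bounded
solution therefore yields an eigenvector `n ↦ z ^ n`, and boundedness in both directions forces
`‖z‖ = 1`. Three unit complex numbers `1, z ^ a, z ^ b` with zero sum are the three cube roots of
unity, so `z ^ 3 = 1` by coprimality and `0, a, b` are pairwise distinct mod 3. Conversely, when
they are, `n ↦ 2, -1, -1` according to `n mod 3` is a solution on `ℤ` and on `ℤ/6ℤ`; solutions
that are periodic or live on `ℤ/nℤ` are bounded.
-/

open Finset Function ComplexConjugate

theorem sum_insert_zero_pair {M : Type*} [AddCommMonoid M] {a b : ℕ} (ha : a ≠ 0) (hb : b ≠ 0)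
    (hab : a ≠ b) (f : ℕ → M) : ∑ s ∈ ({0, a, b} : Finset ℕ), f s = f 0 + f a + f b := by
  rw [sum_insert (by simp [ha.symm, hb.symm]), sum_pair hab, add_assoc]

theorem sum_comp_ringHom_eq_zero {R S M : Type*} [NonAssocSemiring R] [NonAssocSemiring S]
    [AddCommMonoid M] (K : Finset ℕ) (f : R →+* S) {y : S → M}
    (hy : ∀ g, ∑ s ∈ K, y (g + s) = 0) (r : R) : ∑ s ∈ K, y (f (r + s)) = 0 := by
  simpa only [map_add, map_natCast] using hy (f r)

theorem Function.Periodic.exists_norm_le {E : Type*} [Norm E] {x : ℤ → E} {p : ℤ}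
    (hx : Periodic x p) (hp : 0 < p) : ∃ M : ℝ, ∀ n, ‖x n‖ ≤ M := by
  obtain ⟨M, hM⟩ := ((Set.finite_Ico 0 p).image fun n => ‖x n‖).bddAbove
  refine ⟨M, fun n => ?_⟩
  obtain ⟨m, hm, hxm⟩ := hx.exists_mem_Ico₀ hp n
  exact hxm ▸ hM ⟨m, hm, rfl⟩

/-- `g ↦ ω ^ g + ω ^ (-g)` for a primitive cube root of unity `ω`. -/
def traceCubeRoot (g : ZMod 3) : ℤ := if g = 0 then 2 else -1

theorem traceCubeRoot_add_add :
    ∀ g u v : ZMod 3, u ≠ 0 → v ≠ 0 → u ≠ v →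
      traceCubeRoot g + traceCubeRoot (g + u) + traceCubeRoot (g + v) = 0 := by
  decide

theorem sum_traceCubeRoot_eq_zero {a b : ℕ} (ha : (a : ZMod 3) ≠ 0) (hb : (b : ZMod 3) ≠ 0)
    (hab : (a : ZMod 3) ≠ b) (g : ZMod 3) :
    ∑ s ∈ ({0, a, b} : Finset ℕ), traceCubeRoot (g + s) = 0 := by
  rw [sum_insert_zero_pair (by rintro rfl; simp at ha) (by rintro rfl; simp at hb)
    (by rintro rfl; exact hab rfl)]
  simpa using traceCubeRoot_add_add g _ _ ha hb hab

theorem eq_zero_of_forall_Ico {M : Type*} [AddMonoid M] {a b : ℕ} (ha : 0 < a) (hab : a < b)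
    {x : ℤ → M} (hsol : ∀ n : ℤ, x n + x (n + a) + x (n + b) = 0)
    (hzero : ∀ n : ℤ, 0 ≤ n → n < b → x n = 0) : x = 0 := by
  have hwindow : ∀ m : ℕ, ∀ n : ℤ, -m ≤ n → n < b + m → x n = 0 := by
    intro m
    induction m with
    | zero => simpa using hzero
    | succ m ih =>
      intro n h₁ h₂
      by_cases hlo : n = -(m + 1)
      · have := hsol n
        rwa [ih (n + a) (by omega) (by omega), ih (n + b) (by omega) (by omega), add_zero,
          add_zero] at this
      by_cases hhi : n = b + m
      · have := hsol m
        rwa [ih m (by omega) (by omega), ih (m + a) (by omega) (by omega), zero_add, zero_add,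
          add_comm, ← hhi] at this
      exact ih n (by omega) (by omega)
  funext n
  exact hwindow n.natAbs n (by omega) (by omega)

def boundedSolutions (a b : ℕ) : Submodule ℂ (ℤ → ℂ) where
  carrier := {x | (∃ M : ℝ, ∀ n, ‖x n‖ ≤ M) ∧ ∀ n : ℤ, x n + x (n + a) + x (n + b) = 0}
  add_mem' := by
    rintro x y ⟨⟨Mx, hMx⟩, hx⟩ ⟨⟨My, hMy⟩, hy⟩
    refine ⟨⟨Mx + My, fun n => (norm_add_le _ _).trans (add_le_add (hMx n) (hMy n))⟩, fun n => ?_⟩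
    simp only [Pi.add_apply]
    linear_combination hx n + hy n
  zero_mem' := ⟨⟨0, by simp⟩, by simp⟩
  smul_mem' := by
    rintro c x ⟨⟨M, hM⟩, hx⟩
    refine ⟨⟨‖c‖ * M, fun n => ?_⟩, fun n => ?_⟩
    · rw [Pi.smul_apply, smul_eq_mul, norm_mul]
      exact mul_le_mul_of_nonneg_left (hM n) (norm_nonneg c)
    · simp only [Pi.smul_apply, smul_eq_mul]
      linear_combination c * hx n

def boundedSolutions.shift (a b : ℕ) : boundedSolutions a b →ₗ[ℂ] boundedSolutions a b :=
  (LinearMap.funLeft ℂ ℂ (· + 1 : ℤ → ℤ)).restrict fun _ ⟨⟨M, hM⟩, hx⟩ =>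
    ⟨⟨M, fun n => hM _⟩, fun n => by
      simpa only [LinearMap.funLeft_apply, add_right_comm] using hx (n + 1)⟩

theorem finiteDimensional_boundedSolutions {a b : ℕ} (ha : 0 < a) (hab : a < b) :
    FiniteDimensional ℂ (boundedSolutions a b) := by
  refine Module.Finite.of_injective ((LinearMap.funLeft ℂ ℂ fun i : Fin b => (i : ℤ)).comp
    (boundedSolutions a b).subtype) ?_
  rw [injective_iff_map_eq_zero]
  intro ⟨x, hx⟩ h0
  refine Subtype.ext (eq_zero_of_forall_Ico ha hab hx.2 fun n h₀ h₁ => ?_)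
  simpa [show ((n.toNat : ℕ) : ℤ) = n by omega] using congrFun h0 ⟨n.toNat, by omega⟩

theorem eq_mul_zpow_of_forall_add_one {K : Type*} [Field K] {y : ℤ → K} {z : K} (hz : z ≠ 0)
    (h : ∀ k, y (k + 1) = z * y k) (k : ℤ) : y k = y 0 * z ^ k := by
  induction k using Int.induction_on with
  | zero => simp
  | succ i ih => rw [h, ih, zpow_add_one₀ hz]; ring
  | pred i ih =>
    have := h (-i - 1)
    rw [sub_add_cancel, ih] at this
    rw [zpow_sub_one₀ hz, ← mul_assoc, this]
    field_simp

theorem eq_one_of_forall_mul_zpow_le {r C M : ℝ} (hr : 0 < r) (hC : 0 < C)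
    (h : ∀ k : ℤ, C * r ^ k ≤ M) : r = 1 := by
  by_contra hne
  rcases lt_or_gt_of_ne hne with h1 | h1
  · obtain ⟨n, hn⟩ := pow_unbounded_of_one_lt (M / C) ((one_lt_inv₀ hr).2 h1)
    have := h (-n)
    rw [zpow_neg, zpow_natCast, ← inv_pow] at this
    rw [div_lt_iff₀ hC] at hn
    nlinarith
  · obtain ⟨n, hn⟩ := pow_unbounded_of_one_lt (M / C) h1
    have := h n
    rw [zpow_natCast] at this
    rw [div_lt_iff₀ hC] at hn
    nlinarith

theorem exists_norm_eq_one_root {a b : ℕ} (ha : 0 < a) (hab : a < b) {x : ℤ → ℂ} (hx : x ≠ 0)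
    (hbdd : ∃ M : ℝ, ∀ n, ‖x n‖ ≤ M) (hsol : ∀ n : ℤ, x n + x (n + a) + x (n + b) = 0) :
    ∃ z : ℂ, ‖z‖ = 1 ∧ 1 + z ^ a + z ^ b = 0 := by
  have := finiteDimensional_boundedSolutions ha hab
  have : Nontrivial (boundedSolutions a b) :=
    ⟨⟨⟨x, hbdd, hsol⟩, 0, fun h => hx (congrArg Subtype.val h)⟩⟩
  obtain ⟨z, hz⟩ := Module.End.exists_eigenvalue (boundedSolutions.shift a b)
  obtain ⟨⟨y, ⟨M, hM⟩, hy⟩, hyz⟩ := hz.exists_hasEigenvector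
  have hstep : ∀ k, y (k + 1) = z * y k :=
    fun k => congrFun (congrArg Subtype.val hyz.apply_eq_smul) k
  have hyne : y ≠ 0 := fun h => hyz.2 (Subtype.ext h)
  have hz0 : z ≠ 0 := by
    rintro rfl
    exact hyne (funext fun k => by simpa using hstep (k - 1))
  have hgeom := eq_mul_zpow_of_forall_add_one hz0 hstep
  have hy0 : y 0 ≠ 0 := fun h => hyne (funext fun k => by simp [hgeom k, h])
  refine ⟨z, eq_one_of_forall_mul_zpow_le (norm_pos_iff.2 hz0) (norm_pos_iff.2 hy0)
    (M := M) fun k => ?_, ?_⟩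
  · simpa only [hgeom k, norm_mul, norm_zpow] using hM k
  · have := hy 0
    rw [zero_add, zero_add, hgeom a, hgeom b, zpow_natCast, zpow_natCast] at this
    exact (mul_eq_zero.1 (by linear_combination this)).resolve_left hy0

theorem pow_three_eq_one_of_one_add_add_eq_zero {u v : ℂ} (hu : ‖u‖ = 1) (hv : ‖v‖ = 1)
    (h : 1 + u + v = 0) : u ^ 3 = 1 := by
  have mul_conj_eq_one : ∀ w : ℂ, ‖w‖ = 1 → w * conj w = 1 := fun w hw => by
    rw [Complex.mul_conj, Complex.normSq_eq_norm_sq, hw]; norm_num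
  have hconj : conj u = -1 - u := by
    have := mul_conj_eq_one v hv
    rw [show v = -1 - u by linear_combination h, map_sub, map_neg, map_one] at this
    linear_combination this - mul_conj_eq_one u hu
  have := mul_conj_eq_one u hu
  rw [hconj] at this
  linear_combination (1 - u) * this

theorem pow_three_eq_one_of_coprime {M : Type*} [Monoid M] {a b : ℕ} (hab : Nat.Coprime a b)
    {z : M} (ha : (z ^ a) ^ 3 = 1) (hb : (z ^ b) ^ 3 = 1) : z ^ 3 = 1 := by
  have := pow_gcd_eq_one.2 ⟨(pow_mul z a 3).trans ha, (pow_mul z b 3).trans hb⟩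
  rwa [Nat.gcd_mul_right, hab, one_mul] at this

theorem natCast_zmod_three_ne_of_root {a b : ℕ} (hab : Nat.Coprime a b) {z : ℂ} (hz : ‖z‖ = 1)
    (h : 1 + z ^ a + z ^ b = 0) :
    (a : ZMod 3) ≠ 0 ∧ (b : ZMod 3) ≠ 0 ∧ (a : ZMod 3) ≠ b := by
  have hnorm (n : ℕ) : ‖z ^ n‖ = 1 := by rw [norm_pow, hz, one_pow]
  have hz3 : z ^ 3 = 1 := pow_three_eq_one_of_coprime hab
    (pow_three_eq_one_of_one_add_add_eq_zero (hnorm a) (hnorm b) h)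
    (pow_three_eq_one_of_one_add_add_eq_zero (hnorm b) (hnorm a) (by linear_combination h))
  have hpow (m n : ℕ) (hmn : (m : ZMod 3) = n) : z ^ m = z ^ n :=
    pow_eq_pow_of_modEq ((ZMod.natCast_eq_natCast_iff _ _ _).1 hmn) hz3
  refine ⟨fun ha => ?_, fun hb => ?_, fun hab => ?_⟩
  · have := hnorm b
    rw [show z ^ b = -2 by linear_combination h - hpow a 0 (by simpa using ha)] at this
    norm_num at this
  · have := hnorm a
    rw [show z ^ a = -2 by linear_combination h - hpow b 0 (by simpa using hb)] at this
    norm_num at this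
  · have := hnorm a
    rw [show z ^ a = -1 / 2 by linear_combination h / 2 + hpow a b hab / 2] at this
    norm_num at this

theorem natCast_zmod_three_ne_of_bounded_solution {a b : ℕ} (ha : 0 < a) (hab : a < b)
    (hcop : Nat.Coprime a b) {x : ℤ → ℂ} (hx : x ≠ 0) (hbdd : ∃ M : ℝ, ∀ n, ‖x n‖ ≤ M)
    (hsol : ∀ n : ℤ, ∑ s ∈ ({0, a, b} : Finset ℕ), x (n + (s : ℤ)) = 0) :
    (a : ZMod 3) ≠ 0 ∧ (b : ZMod 3) ≠ 0 ∧ (a : ZMod 3) ≠ b := by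
  obtain ⟨z, hz, hroot⟩ := exists_norm_eq_one_root ha hab hx hbdd fun n => by
    rw [← hsol n, sum_insert_zero_pair ha.ne' (by omega) hab.ne, Nat.cast_zero, add_zero]
  exact natCast_zmod_three_ne_of_root hcop hz hroot

theorem exists_periodic_int_solution {a b : ℕ} (ha : (a : ZMod 3) ≠ 0) (hb : (b : ZMod 3) ≠ 0)
    (hab : (a : ZMod 3) ≠ b) :
    ∃ x : ℤ → ℤ, x ≠ 0 ∧ (∃ p : ℤ, 1 ≤ p ∧ ∀ n : ℤ, x (n + p) = x n) ∧
      ∀ n : ℤ, ∑ s ∈ ({0, a, b} : Finset ℕ), x (n + (s : ℤ)) = 0 :=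
  ⟨traceCubeRoot ∘ Int.cast, fun h => by simpa [traceCubeRoot] using congrFun h 0,
    ⟨3, by norm_num, fun n => by simp [show (3 : ZMod 3) = 0 from rfl]⟩,
    sum_comp_ringHom_eq_zero _ (Int.castRingHom _) (sum_traceCubeRoot_eq_zero ha hb hab)⟩

theorem exists_zmod_six_solution {a b : ℕ} (ha : (a : ZMod 3) ≠ 0) (hb : (b : ZMod 3) ≠ 0)
    (hab : (a : ZMod 3) ≠ b) :
    ∃ x : ZMod 6 → ℂ, x ≠ 0 ∧
      ∀ g : ZMod 6, ∑ s ∈ ({0, a, b} : Finset ℕ), x (g + (s : ZMod 6)) = 0 := by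
  let f := ZMod.castHom (show 3 ∣ 6 by norm_num) (ZMod 3)
  refine ⟨fun g => traceCubeRoot (f g), fun h => by simpa [traceCubeRoot] using congrFun h 0,
    fun g => ?_⟩
  beta_reduce
  exact_mod_cast sum_comp_ringHom_eq_zero _ f (sum_traceCubeRoot_eq_zero ha hb hab) g

theorem stmt_6 (a b : ℕ) (ha : 0 < a) (hab : a < b) (hgcd : Nat.gcd a b = 1) :
    List.TFAE
      [ ∃ x : ℤ → ℂ, x ≠ 0 ∧ (∃ M : ℝ, ∀ n : ℤ, ‖x n‖ ≤ M) ∧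
          ∀ n : ℤ, ∑ s ∈ ({0, a, b} : Finset ℕ), x (n + (s : ℤ)) = 0,
        ∃ x : ℤ → ℤ, x ≠ 0 ∧ (∃ p : ℤ, 1 ≤ p ∧ ∀ n : ℤ, x (n + p) = x n) ∧
          ∀ n : ℤ, ∑ s ∈ ({0, a, b} : Finset ℕ), x (n + (s : ℤ)) = 0,
        ∃ n : ℕ, 3 < n ∧ ∃ x : ZMod n → ℂ, x ≠ 0 ∧
          ∀ g : ZMod n, ∑ s ∈ ({0, a, b} : Finset ℕ), x (g + (s : ZMod n)) = 0 ] := by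
  tfae_have 1 → 2 := fun ⟨x, hx, hbdd, hsol⟩ => by
    obtain ⟨h₀, h₁, h₂⟩ := natCast_zmod_three_ne_of_bounded_solution ha hab hgcd hx hbdd hsol
    exact exists_periodic_int_solution h₀ h₁ h₂
  tfae_have 1 → 3 := fun ⟨x, hx, hbdd, hsol⟩ => by
    obtain ⟨h₀, h₁, h₂⟩ := natCast_zmod_three_ne_of_bounded_solution ha hab hgcd hx hbdd hsol
    exact ⟨6, by norm_num, exists_zmod_six_solution h₀ h₁ h₂⟩
  tfae_have 2 → 1 := fun ⟨x, hx, ⟨p, hp, hper⟩, hsol⟩ =>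
    ⟨(↑) ∘ x, fun h => hx (funext fun n => Int.cast_eq_zero.1 (congrFun h n)),
      (Periodic.comp hper _).exists_norm_le (by omega), fun n => by
        simp only [comp_apply]; exact_mod_cast hsol n⟩
  tfae_have 3 → 1 := fun ⟨n, hn, y, hy, hsol⟩ => by
    have : NeZero n := ⟨by omega⟩
    exact ⟨y ∘ Int.cast, ZMod.intCast_surjective.injective_comp_right.ne hy,
      Periodic.exists_norm_le (p := n) (fun m => by simp) (by omega),
      sum_comp_ringHom_eq_zero _ (Int.castRingHom _) hsol⟩
  tfae_finish
end

section
/- For every integer k > 3 there exists a finite set K of nonnegative integers with 0 ∈ K and |K| = k such that K is p-arithmetic in ℤ (i.e. the system A(K) has a nontrivial periodic complex solution) but K is not a tile of ℤ (i.e. there is no set C ⊆ ℤ such that the translates c + K, c ∈ C, are pairwise disjoint and cover ℤ). -/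
/-- Local obstruction to tiling: if there is `g : ℤ` such that every `s ∈ K`
satisfies `s ≠ g` and `g - s ∈ K - K`, then `K` is not a tile of `ℤ`. -/
lemma nontile_aux (K : Finset ℕ) (g : ℤ)
    (h : ∀ s ∈ K, (s : ℤ) ≠ g ∧ ∃ a ∈ K, ∃ b ∈ K, g - (s : ℤ) = (a : ℤ) - (b : ℤ)) :
    ¬ ∃ C : Set ℤ,
        (C.PairwiseDisjoint fun c => (fun s : ℕ => c + (s : ℤ)) '' (K : Set ℕ)) ∧
        ⋃ c ∈ C, (fun s : ℕ => c + (s : ℤ)) '' (K : Set ℕ) = Set.univ := by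
  rintro ⟨C, hdisj, hcov⟩
  have h0 : (0 : ℤ) ∈ ⋃ c ∈ C, (fun s : ℕ => c + (s : ℤ)) '' (K : Set ℕ) := by
    rw [hcov]; trivial
  simp only [Set.mem_iUnion, Set.mem_image, Finset.mem_coe] at h0
  obtain ⟨c₀, hc₀, s₀, hs₀, hcs₀⟩ := h0
  have h1 : (c₀ + g) ∈ ⋃ c ∈ C, (fun s : ℕ => c + (s : ℤ)) '' (K : Set ℕ) := by
    rw [hcov]; trivial
  simp only [Set.mem_iUnion, Set.mem_image, Finset.mem_coe] at h1
  obtain ⟨c₁, hc₁, s₁, hs₁, hcs₁⟩ := h1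
  obtain ⟨hne, a, ha, b, hb, hab⟩ := h s₁ hs₁
  have hcc : c₁ ≠ c₀ := by intro hE; rw [hE] at hcs₁; omega
  have hd := hdisj hc₁ hc₀ hcc
  have hpt : c₁ + (b : ℤ) = c₀ + (a : ℤ) := by omega
  exact (Set.disjoint_left.mp hd ⟨b, hb, rfl⟩) ⟨a, ha, hpt.symm⟩

/-- From a root of unity killing the mask, get a nontrivial periodic solution. -/
lemma arith_aux (K : Finset ℕ) (ω : ℂ) (p : ℤ) (hp : 1 ≤ p) (hω0 : ω ≠ 0)
    (hper : ω ^ p = 1) (hsum : ∑ s ∈ K, ω ^ (s : ℤ) = 0) :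
    ∃ x : ℤ → ℂ, x ≠ 0 ∧ (∃ p : ℤ, 1 ≤ p ∧ ∀ n : ℤ, x (n + p) = x n) ∧
      ∀ n : ℤ, ∑ s ∈ K, x (n + (s : ℤ)) = 0 := by
  refine ⟨fun n => ω ^ n, ?_, ⟨p, hp, ?_⟩, ?_⟩
  · intro hE
    have := congrFun hE 0
    simp at this
  · intro n; show ω ^ (n + p) = ω ^ n
    rw [zpow_add₀ hω0, hper, mul_one]
  · intro n
    simp only
    have : ∀ s : ℕ, ω ^ (n + (s:ℤ)) = ω ^ n * ω ^ (s:ℤ) := fun s => zpow_add₀ hω0 n s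
    simp_rw [this]
    rw [← Finset.mul_sum, hsum, mul_zero]

theorem stmt_8 (k : ℕ) (hk : 3 < k) :
    ∃ K : Finset ℕ, 0 ∈ K ∧ K.card = k ∧
      (∃ x : ℤ → ℂ, x ≠ 0 ∧ (∃ p : ℤ, 1 ≤ p ∧ ∀ n : ℤ, x (n + p) = x n) ∧
        ∀ n : ℤ, ∑ s ∈ K, x (n + (s : ℤ)) = 0) ∧
      ¬ ∃ C : Set ℤ,
          (C.PairwiseDisjoint fun c => (fun s : ℕ => c + (s : ℤ)) '' (K : Set ℕ)) ∧
          ⋃ c ∈ C, (fun s : ℕ => c + (s : ℤ)) '' (K : Set ℕ) = Set.univ := by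
  rcases Nat.even_or_odd k with he | ho
  · -- even case : K = {3j, 3j+1 : j < r}, ω = -1
    obtain ⟨r, hkr⟩ := he
    have hr : 2 ≤ r := by omega
    set A : Finset ℕ := (Finset.range r).image (fun j => 3 * j) with hA
    set B : Finset ℕ := (Finset.range r).image (fun j => 3 * j + 1) with hB
    have hmemA : ∀ s, s ∈ A ↔ ∃ j < r, 3 * j = s := by
      intro s; simp [hA, Finset.mem_image]
    have hmemB : ∀ s, s ∈ B ↔ ∃ j < r, 3 * j + 1 = s := by
      intro s; simp [hB, Finset.mem_image]
    have hd : Disjoint A B := by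
      rw [Finset.disjoint_left]
      intro s hsA hsB
      rw [hmemA] at hsA; rw [hmemB] at hsB
      obtain ⟨j, _, hj⟩ := hsA; obtain ⟨i, _, hi⟩ := hsB
      omega
    refine ⟨A ∪ B, ?_, ?_, ?_, ?_⟩
    · rw [Finset.mem_union, hmemA]; exact Or.inl ⟨0, by omega, by omega⟩
    · rw [Finset.card_union_of_disjoint hd,
        Finset.card_image_of_injective _ (fun a b hab => by omega),
        Finset.card_image_of_injective _ (fun a b hab => by omega),
        Finset.card_range]
      omega
    · refine arith_aux _ (-1) 2 (by norm_num) (by norm_num) (by norm_num) ?_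
      simp_rw [zpow_natCast]
      rw [Finset.sum_union hd, Finset.sum_image (fun a _ b _ hab => by omega),
        Finset.sum_image (fun a _ b _ hab => by omega), ← Finset.sum_add_distrib]
      refine Finset.sum_eq_zero fun j _ => ?_
      rw [pow_succ]; ring
    · refine nontile_aux _ 2 ?_
      intro s hs
      rw [Finset.mem_union, hmemA, hmemB] at hs
      rcases hs with ⟨j, hj, rfl⟩ | ⟨j, hj, rfl⟩
      · rcases Nat.eq_zero_or_pos j with rfl | hj1
        · exact ⟨by omega, 3, by rw [Finset.mem_union, hmemA]; exact Or.inl ⟨1, by omega, by omega⟩,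
            1, by rw [Finset.mem_union, hmemB]; exact Or.inr ⟨0, by omega, by omega⟩, by omega⟩
        · exact ⟨by omega, 0, by rw [Finset.mem_union, hmemA]; exact Or.inl ⟨0, by omega, by omega⟩,
            3 * (j - 1) + 1, by rw [Finset.mem_union, hmemB]; exact Or.inr ⟨j - 1, by omega, by omega⟩,
            by omega⟩
      · exact ⟨by omega, 1, by rw [Finset.mem_union, hmemB]; exact Or.inr ⟨0, by omega, by omega⟩,
          3 * j, by rw [Finset.mem_union, hmemA]; exact Or.inl ⟨j, by omega, by omega⟩, by omega⟩
  · -- odd case : K = {0,2,4} ∪ {6j+5, 6j+8 : j < t}, ω primitive 6th root of unity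
    obtain ⟨m, hkm⟩ := ho
    set t : ℕ := m - 1 with ht
    have htk : k = 2 * t + 3 := by omega
    have ht1 : 1 ≤ t := by omega
    set X : Finset ℕ := {0, 2, 4} with hX
    set Y : Finset ℕ := (Finset.range t).image (fun j => 6 * j + 5) with hY
    set Z : Finset ℕ := (Finset.range t).image (fun j => 6 * j + 8) with hZ
    have hmemX : ∀ s, s ∈ X ↔ s = 0 ∨ s = 2 ∨ s = 4 := by
      intro s; simp [hX]
    have hmemY : ∀ s, s ∈ Y ↔ ∃ j < t, 6 * j + 5 = s := by
      intro s; simp [hY, Finset.mem_image]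
    have hmemZ : ∀ s, s ∈ Z ↔ ∃ j < t, 6 * j + 8 = s := by
      intro s; simp [hZ, Finset.mem_image]
    have hdXY : Disjoint X Y := by
      rw [Finset.disjoint_left]
      intro s hsX hsY
      rw [hmemX] at hsX; rw [hmemY] at hsY
      obtain ⟨j, _, hj⟩ := hsY; omega
    have hdXZ : Disjoint X Z := by
      rw [Finset.disjoint_left]
      intro s hsX hsZ
      rw [hmemX] at hsX; rw [hmemZ] at hsZ
      obtain ⟨j, _, hj⟩ := hsZ; omega
    have hdYZ : Disjoint Y Z := by
      rw [Finset.disjoint_left]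
      intro s hsY hsZ
      rw [hmemY] at hsY; rw [hmemZ] at hsZ
      obtain ⟨j, _, hj⟩ := hsY; obtain ⟨i, _, hi⟩ := hsZ; omega
    have hdXYZ : Disjoint (X ∪ Y) Z := by
      rw [Finset.disjoint_union_left]; exact ⟨hdXZ, hdYZ⟩
    have hmemK : ∀ s, s ∈ X ∪ Y ∪ Z ↔
        (s = 0 ∨ s = 2 ∨ s = 4) ∨ (∃ j < t, 6 * j + 5 = s) ∨ (∃ j < t, 6 * j + 8 = s) := by
      intro s
      rw [Finset.mem_union, Finset.mem_union, hmemX, hmemY, hmemZ, or_assoc]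
    -- the sixth root of unity
    set ω : ℂ := (1 + Real.sqrt 3 * Complex.I) / 2 with hωdef
    have hs3 : ((Real.sqrt 3 : ℝ) : ℂ) ^ 2 = 3 := by
      norm_cast
      rw [Real.sq_sqrt] ; norm_num
    have hω : ω ^ 2 = ω - 1 := by
      have hI : (Complex.I) ^ 2 = -1 := Complex.I_sq
      rw [hωdef]
      linear_combination (Complex.I ^ 2 / 4) * hs3 + (3 / 4) * hI
    have h3 : ω ^ 3 = -1 := by linear_combination (ω + 1) * hω
    have hω0 : ω ≠ 0 := by
      intro hE
      rw [hE] at h3; norm_num at h3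
    refine ⟨X ∪ Y ∪ Z, ?_, ?_, ?_, ?_⟩
    · rw [hmemK]; exact Or.inl (Or.inl rfl)
    · rw [Finset.card_union_of_disjoint hdXYZ, Finset.card_union_of_disjoint hdXY,
        Finset.card_image_of_injective _ (fun a b hab => by omega),
        Finset.card_image_of_injective _ (fun a b hab => by omega),
        Finset.card_range]
      rw [hX]; simp; omega
    · refine arith_aux _ ω 6 (by norm_num) hω0 ?_ ?_
      · show ω ^ (6 : ℤ) = 1
        have : ω ^ (6 : ℕ) = 1 := by
          rw [show (6 : ℕ) = 3 * 2 from rfl, pow_mul, h3]; norm_num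
        rw [show (6 : ℤ) = ((6 : ℕ) : ℤ) from rfl, zpow_natCast]; exact this
      · simp_rw [zpow_natCast]
        rw [Finset.sum_union hdXYZ, Finset.sum_union hdXY,
          Finset.sum_image (fun a _ b _ hab => by omega),
          Finset.sum_image (fun a _ b _ hab => by omega)]
        have hXsum : ∑ s ∈ X, ω ^ s = 1 + ω ^ 2 + ω ^ 4 := by
          rw [hX]
          rw [Finset.sum_insert (by norm_num), Finset.sum_insert (by norm_num),
            Finset.sum_singleton]
          ring
        rw [hXsum, add_assoc, ← Finset.sum_add_distrib]
        have hterm : ∀ j : ℕ, ω ^ (6 * j + 5) + ω ^ (6 * j + 8) = 0 := by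
          intro j
          linear_combination (ω ^ (6 * j + 5)) * h3
        rw [Finset.sum_congr rfl (fun j _ => hterm j), Finset.sum_const, smul_zero]
        linear_combination (ω ^ 2 + ω + 1) * hω
    · refine nontile_aux _ 3 ?_
      intro s hs
      rw [hmemK] at hs
      have h5Y : (5 : ℕ) ∈ X ∪ Y ∪ Z := by
        rw [hmemK]; exact Or.inr (Or.inl ⟨0, by omega, by omega⟩)
      have h2X : (2 : ℕ) ∈ X ∪ Y ∪ Z := by rw [hmemK]; omega
      have h4X : (4 : ℕ) ∈ X ∪ Y ∪ Z := by rw [hmemK]; omega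
      have h0X : (0 : ℕ) ∈ X ∪ Y ∪ Z := by rw [hmemK]; omega
      rcases hs with (rfl | rfl | rfl) | ⟨j, hj, rfl⟩ | ⟨j, hj, rfl⟩
      · exact ⟨by omega, 5, h5Y, 2, h2X, by omega⟩
      · exact ⟨by omega, 5, h5Y, 4, h4X, by omega⟩
      · exact ⟨by omega, 4, h4X, 5, h5Y, by omega⟩
      · rcases Nat.eq_zero_or_pos j with rfl | hj1
        · exact ⟨by omega, 2, h2X, 4, h4X, by omega⟩
        · exact ⟨by omega, 0, h0X, 6 * (j - 1) + 8,
            by rw [hmemK]; exact Or.inr (Or.inr ⟨j - 1, by omega, by omega⟩), by omega⟩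
      · exact ⟨by omega, 0, h0X, 6 * j + 5,
          by rw [hmemK]; exact Or.inr (Or.inl ⟨j, by omega, by omega⟩), by omega⟩
end

section
/- Let K = {0, 1, 3, 5, 6}. Then the system A(K) has a nontrivial bounded complex solution, but it has no nontrivial periodic complex solution. Equivalently, the polynomial X^6 + X^5 + X^3 + X + 1 has a complex root of modulus 1, but none of its complex roots is a root of unity. -/
/-!
Write `P = X^6 + X^5 + X^3 + X + 1`. On the unit circle,
`e^{-3iθ} P(e^{iθ}) = 2 cos 3θ + 2 cos 2θ + 1`, which is `5` at `θ = 0` and `-1` at `θ = π/2`;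
so `P` has a root `z` of modulus one, and `n ↦ z^n` is a bounded solution. If a root of `P` had
order `d`, the cyclotomic polynomial `Φ_d` would divide `P`, so `φ(d) ≤ 6`; this forces `d` to
divide one of `8, 10, 12, 14, 18`, and for each such `n` an explicit Bézout identity shows that
`P` and `X^n - 1` have no common root. Finally, a `p`-periodic solution is annihilated by both `P`
and `X^p - 1` evaluated at the shift operator; these polynomials are coprime, so it vanishes.
-/

open Polynomial

namespace Nat

theorem le_two_mul_totient_prime_pow {p : ℕ} (hp : p.Prime) (k : ℕ) :
    p ^ k ≤ 2 * φ (p ^ k) := by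
  cases k with
  | zero => simp
  | succ k =>
    rw [totient_prime_pow_succ hp, pow_succ]
    have hp2 := hp.two_le
    have hpk := Nat.pow_pos (n := k) hp.pos
    nlinarith [Nat.sub_add_cancel hp.one_le]

-- A prime power `q` with `φ(q) ≤ 6` is at most `12`, hence one of `2, 3, 4, 5, 7, 8, 9`.
theorem dvd_2520_of_totient_le_six {d : ℕ} (hd : d ≠ 0) (h : φ d ≤ 6) : d ∣ 2520 := by
  rw [dvd_iff_prime_pow_dvd_dvd]
  intro p k hp hpk
  have hle : φ (p ^ k) ≤ 6 :=
    (le_of_dvd (totient_pos.2 (pos_of_ne_zero hd)) (totient_dvd_of_dvd hpk)).trans h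
  have hmem : p ^ k ∈ Finset.Icc 1 12 := Finset.mem_Icc.2
    ⟨one_le_pow _ _ hp.pos, (le_two_mul_totient_prime_pow hp k).trans (by omega)⟩
  have key : ∀ q ∈ Finset.Icc 1 12, φ q ≤ 6 → q ∣ 2520 := by decide
  exact key _ hmem hle

set_option maxRecDepth 100000 in
theorem exists_mem_dvd_of_totient_le_six {d : ℕ} (hd : d ≠ 0) (h : φ d ≤ 6) :
    ∃ n ∈ ({8, 10, 12, 14, 18} : Finset ℕ), d ∣ n := by
  have key : ∀ e ∈ divisors 2520, φ e ≤ 6 → ∃ n ∈ ({8, 10, 12, 14, 18} : Finset ℕ), e ∣ n := by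
    decide
  exact key d (mem_divisors.2 ⟨dvd_2520_of_totient_le_six hd h, by norm_num⟩) h

end Nat

theorem IsPrimitiveRoot.totient_le_natDegree {F : Type*} [Field F] [CharZero F] {μ : F} {n : ℕ}
    (hμ : IsPrimitiveRoot μ n) (hn : 0 < n) {p : ℤ[X]} (hp : p ≠ 0) (hpμ : aeval μ p = 0) :
    n.totient ≤ p.natDegree :=
  hμ.totient_le_degree_minpoly.trans <|
    natDegree_le_of_dvd (minpoly.isIntegrallyClosed_dvd (hμ.isIntegral hn) hpμ) hp

section SeqShift

variable (R : Type*) [CommRing R]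

def seqShift : (ℤ → R) →ₗ[R] (ℤ → R) := LinearMap.funLeft R R (· + 1)

variable {R}

theorem seqShift_pow_apply (k : ℕ) (x : ℤ → R) (n : ℤ) : (seqShift R ^ k) x n = x (n + k) := by
  induction k generalizing x with
  | zero => simp
  | succ k ih =>
    rw [pow_succ, Module.End.mul_apply, ih]
    simp [seqShift, LinearMap.funLeft_apply, add_assoc]

theorem aeval_seqShift_sum_X_pow (K : Finset ℕ) (x : ℤ → R) (n : ℤ) :
    aeval (seqShift R) (∑ s ∈ K, X ^ s : R[X]) x n = ∑ s ∈ K, x (n + s) := by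
  simp [Finset.sum_apply, seqShift_pow_apply]

theorem aeval_seqShift_X_pow_sub_one_of_periodic {x : ℤ → R} {p : ℕ} (hx : ∀ n, x (n + p) = x n) :
    aeval (seqShift R) (X ^ p - 1 : R[X]) x = 0 := by
  ext n
  simp [seqShift_pow_apply, hx]

theorem eq_zero_of_periodic_of_isCoprime {K : Finset ℕ} {p : ℕ}
    (hK : IsCoprime (∑ s ∈ K, X ^ s : R[X]) (X ^ p - 1)) {x : ℤ → R}
    (hsol : ∀ n, ∑ s ∈ K, x (n + s) = 0) (hx : ∀ n, x (n + p) = x n) : x = 0 :=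
  Submodule.disjoint_def.1 (disjoint_ker_aeval_of_isCoprime (seqShift R) hK) x
    (LinearMap.mem_ker.2 <| funext fun n => (aeval_seqShift_sum_X_pow K x n).trans (hsol n))
    (LinearMap.mem_ker.2 <| aeval_seqShift_X_pow_sub_one_of_periodic hx)

end SeqShift

theorem eq_zero_of_periodic_of_root_pow_ne_one {F : Type*} [Field F] [IsAlgClosed F]
    {K : Finset ℕ} {p : ℕ}
    (hK : ∀ z : F, ∑ s ∈ K, z ^ s = 0 → z ^ p ≠ 1) {x : ℤ → F}
    (hsol : ∀ n, ∑ s ∈ K, x (n + s) = 0) (hx : ∀ n, x (n + p) = x n) : x = 0 := by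
  refine eq_zero_of_periodic_of_isCoprime
    ((isCoprime_iff_aeval_ne_zero_of_isAlgClosed F F _ _).2 fun z => ?_) hsol hx
  by_contra! h
  simp only [map_sum, map_pow, aeval_X, map_sub, map_one, sub_eq_zero] at h
  exact hK z h.1 h.2

theorem exists_ne_zero_bounded_solution_of_norm_eq_one {F : Type*} [NormedField F]
    {K : Finset ℕ} {z : F} (hz : ‖z‖ = 1) (hK : ∑ s ∈ K, z ^ s = 0) :
    ∃ x : ℤ → F, x ≠ 0 ∧ (∃ M : ℝ, ∀ n, ‖x n‖ ≤ M) ∧ ∀ n, ∑ s ∈ K, x (n + s) = 0 := by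
  have hz0 : z ≠ 0 := norm_ne_zero_iff.1 (hz.trans_ne one_ne_zero)
  refine ⟨fun n => z ^ n, fun h => by simpa using congrFun h 0, ⟨1, fun n => ?_⟩, fun n => ?_⟩
  · simp [norm_zpow, hz]
  · simp_rw [zpow_add₀ hz0, zpow_natCast, ← Finset.mul_sum, hK, mul_zero]

theorem exp_mul_I_sextic (θ : ℝ) :
    Complex.exp (θ * Complex.I) ^ 6 + Complex.exp (θ * Complex.I) ^ 5 +
        Complex.exp (θ * Complex.I) ^ 3 + Complex.exp (θ * Complex.I) + 1 =
      Complex.exp (θ * Complex.I) ^ 3 *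
        ((2 * Real.cos (3 * θ) + 2 * Real.cos (2 * θ) + 1 : ℝ) : ℂ) := by
  set z := Complex.exp (θ * Complex.I)
  set w := Complex.exp (-(θ * Complex.I))
  have hzw : z * w = 1 := by rw [← Complex.exp_add, add_neg_cancel, Complex.exp_zero]
  have two_cos (k : ℕ) : 2 * Complex.cos (k * θ) = z ^ k + w ^ k := by
    rw [Complex.two_cos, ← Complex.exp_nat_mul, ← Complex.exp_nat_mul]
    ring_nf
  have h3 := two_cos 3
  have h2 := two_cos 2
  push_cast at h3 h2 ⊢
  rw [h3, h2]
  linear_combination (-((z * w) ^ 2 + z * w + 1) - z * (z * w + 1)) * hzw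

theorem exists_two_cos_three_mul_add_two_cos_two_mul_add_one_eq_zero :
    ∃ θ : ℝ, 2 * Real.cos (3 * θ) + 2 * Real.cos (2 * θ) + 1 = 0 := by
  have hcont : ContinuousOn (fun θ : ℝ => 2 * Real.cos (3 * θ) + 2 * Real.cos (2 * θ) + 1)
      (Set.Icc 0 (Real.pi / 2)) := by fun_prop
  have hcos : Real.cos (3 * (Real.pi / 2)) = 0 := by
    rw [show 3 * (Real.pi / 2) = Real.pi / 2 + Real.pi by ring, Real.cos_add_pi,
      Real.cos_pi_div_two, neg_zero]
  have h0 : (0 : ℝ) ∈ Set.Icc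
      (2 * Real.cos (3 * (Real.pi / 2)) + 2 * Real.cos (2 * (Real.pi / 2)) + 1)
      (2 * Real.cos (3 * 0) + 2 * Real.cos (2 * 0) + 1) := by
    rw [hcos, show 2 * (Real.pi / 2) = Real.pi by ring, Real.cos_pi]
    norm_num
  obtain ⟨θ, -, hθ⟩ := intermediate_value_Icc' (by positivity) hcont h0
  exact ⟨θ, hθ⟩

theorem exists_norm_eq_one_sextic_eq_zero :
    ∃ z : ℂ, ‖z‖ = 1 ∧ z ^ 6 + z ^ 5 + z ^ 3 + z + 1 = 0 := by
  obtain ⟨θ, hθ⟩ := exists_two_cos_three_mul_add_two_cos_two_mul_add_one_eq_zero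
  refine ⟨Complex.exp (θ * Complex.I), Complex.norm_exp_ofReal_mul_I θ, ?_⟩
  rw [exp_mul_I_sextic, hθ, Complex.ofReal_zero, mul_zero]

theorem sextic_root_pow_ne_one_of_mem {F : Type*} [Field F] [CharZero F] {z : F}
    (hz : z ^ 6 + z ^ 5 + z ^ 3 + z + 1 = 0) {n : ℕ} (hn : n ∈ ({8, 10, 12, 14, 18} : Finset ℕ)) :
    z ^ n ≠ 1 := by
  intro hzn
  simp only [Finset.mem_insert, Finset.mem_singleton] at hn
  refine one_ne_zero (α := F) ?_
  rcases hn with rfl | rfl | rfl | rfl | rfl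
  · linear_combination ((2/5 : F) + (2/5) * z + (2/5) * z ^ 2 + (2/5) * z ^ 3 + (-3/5) * z ^ 4 +
      (-3/5) * z ^ 5 + (-3/5) * z ^ 6 + (2/5) * z ^ 7) * hz + ((-3/5) + (4/5) * z + (4/5) * z ^ 2 +
      (6/5) * z ^ 3 + (1/5) * z ^ 4 + (-2/5) * z ^ 5) * hzn
  · linear_combination ((3/25 : F) + (-2/25) * z + (-12/25) * z ^ 2 + (-2/25) * z ^ 3 +
      (3/25) * z ^ 4 + (3/25) * z ^ 5 + (-2/25) * z ^ 6 + (13/25) * z ^ 7 + (-2/25) * z ^ 8 +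
      (3/25) * z ^ 9) * hz + ((-22/25) + (1/25) * z + (-14/25) * z ^ 2 + (-11/25) * z ^ 3 +
      (-1/25) * z ^ 4 + (-3/25) * z ^ 5) * hzn
  · linear_combination ((1/10 : F) + (-3/20) * z + (-3/20) * z ^ 2 + (1/10) * z ^ 3 +
      (-3/20) * z ^ 4 + (-3/20) * z ^ 5 + (1/10) * z ^ 6 + (7/20) * z ^ 7 + (-3/20) * z ^ 8 +
      (1/10) * z ^ 9 + (-3/20) * z ^ 10 + (7/20) * z ^ 11) * hz + ((-9/10) + (-1/20) * z +
      (-3/10) * z ^ 2 + (1/20) * z ^ 3 + (-1/5) * z ^ 4 + (-7/20) * z ^ 5) * hzn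
  · linear_combination ((22/65 : F) + (17/65) * z + (-23/65) * z ^ 2 + (-8/65) * z ^ 3 +
      (12/65) * z ^ 4 + (-8/65) * z ^ 5 + (-23/65) * z ^ 6 + (17/65) * z ^ 7 + (22/65) * z ^ 8 +
      (-3/65) * z ^ 9 + (-18/65) * z ^ 10 + (27/65) * z ^ 11 + (-18/65) * z ^ 12 +
      (-3/65) * z ^ 13) * hz + ((-43/65) + (3/5) * z + (-6/65) * z ^ 2 + (-9/65) * z ^ 3 +
      (21/65) * z ^ 4 + (3/65) * z ^ 5) * hzn
  · linear_combination ((2/5 : F) + (2/5) * z + (-11/10) * z ^ 2 + (-3/5) * z ^ 3 + (9/10) * z ^ 4 +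
      (2/5) * z ^ 5 + (-3/5) * z ^ 6 + (2/5) * z ^ 7 + (9/10) * z ^ 8 + (-3/5) * z ^ 9 +
      (-11/10) * z ^ 10 + (2/5) * z ^ 11 + (2/5) * z ^ 12 + (-3/5) * z ^ 13 + (-1/10) * z ^ 14 +
      (7/5) * z ^ 15 + (-1/10) * z ^ 16 + (-3/5) * z ^ 17) * hz + ((-3/5) + (4/5) * z +
      (-7/10) * z ^ 2 + (-13/10) * z ^ 3 + (7/10) * z ^ 4 + (3/5) * z ^ 5) * hzn

theorem sextic_root_pow_ne_one {F : Type*} [Field F] [CharZero F] {z : F}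
    (hz : z ^ 6 + z ^ 5 + z ^ 3 + z + 1 = 0) {m : ℕ} (hm : 0 < m) : z ^ m ≠ 1 := by
  intro hzm
  have hd : 0 < orderOf z := orderOf_pos_iff.2 (isOfFinOrder_iff_pow_eq_one.2 ⟨m, hm, hzm⟩)
  have hφ : (orderOf z).totient ≤ 6 := by
    have hp : (X ^ 6 + X ^ 5 + X ^ 3 + X + 1 : ℤ[X]).natDegree = 6 := by compute_degree!
    rw [← hp]
    refine (IsPrimitiveRoot.orderOf z).totient_le_natDegree hd (fun h => ?_) (by simpa using hz)
    simpa using congrArg (eval 0) h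
  obtain ⟨n, hn, hdn⟩ := Nat.exists_mem_dvd_of_totient_le_six hd.ne' hφ
  exact sextic_root_pow_ne_one_of_mem hz hn (orderOf_dvd_iff_pow_eq_one.1 hdn)

theorem sum_pow_eq_sextic {R : Type*} [CommSemiring R] (z : R) :
    ∑ s ∈ ({0, 1, 3, 5, 6} : Finset ℕ), z ^ s = z ^ 6 + z ^ 5 + z ^ 3 + z + 1 := by
  simp only [Finset.mem_insert, zero_ne_one, OfNat.zero_ne_ofNat, Finset.mem_singleton, or_self,
    not_false_eq_true, Finset.sum_insert, pow_zero, OfNat.one_ne_ofNat, pow_one, Nat.reduceEqDiff,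
    Finset.sum_singleton]
  ring

theorem stmt_10 :
    (∃ x : ℤ → ℂ, x ≠ 0 ∧ (∃ M : ℝ, ∀ n : ℤ, ‖x n‖ ≤ M) ∧
        ∀ n : ℤ, ∑ s ∈ ({0, 1, 3, 5, 6} : Finset ℕ), x (n + (s : ℤ)) = 0) ∧
    (¬ ∃ x : ℤ → ℂ, x ≠ 0 ∧ (∃ p : ℤ, 1 ≤ p ∧ ∀ n : ℤ, x (n + p) = x n) ∧
        ∀ n : ℤ, ∑ s ∈ ({0, 1, 3, 5, 6} : Finset ℕ), x (n + (s : ℤ)) = 0) ∧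
    (∃ z : ℂ, ‖z‖ = 1 ∧ z ^ 6 + z ^ 5 + z ^ 3 + z + 1 = 0) ∧
    (∀ z : ℂ, z ^ 6 + z ^ 5 + z ^ 3 + z + 1 = 0 → ¬ ∃ m : ℕ, 0 < m ∧ z ^ m = 1) := by
  obtain ⟨z, hz1, hz⟩ := exists_norm_eq_one_sextic_eq_zero
  refine ⟨exists_ne_zero_bounded_solution_of_norm_eq_one hz1 ((sum_pow_eq_sextic z).trans hz), ?_,
    ⟨z, hz1, hz⟩, fun w hw ⟨m, hm, hwm⟩ => sextic_root_pow_ne_one hw hm hwm⟩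
  rintro ⟨x, hx0, ⟨p, hp, hper⟩, hsol⟩
  lift p to ℕ using by omega
  refine hx0 (eq_zero_of_periodic_of_root_pow_ne_one (fun w hw => ?_) hsol hper)
  exact sextic_root_pow_ne_one ((sum_pow_eq_sextic w).symm.trans hw) (by omega)
end

section
/- Let n ≥ 1 and let F_n be the free group on generators a_1, …, a_n (e.g. FreeGroup (Fin n)). Call two elements g, h ∈ F_n adjacent if g⁻¹h equals some a_i or a_i⁻¹. Let K ⊆ F_n be a finite nonempty set that is connected, i.e. for any x, y ∈ K there is a finite sequence of elements of K starting at x and ending at y in which consecutive elements are adjacent. Then K is a right tile of F_n: there exists C ⊆ F_n such that the left translates cK, c ∈ C, are pairwise disjoint and their union is F_n. -/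
/-!
Each partial right multiplication `x ↦ x * aᵢ⁻¹` on the finite set `K` extends to a permutation
`σᵢ` of `K`, and freeness of `F_n` turns `aᵢ ↦ σᵢ` into an action of `F_n` on `K` in which a
step `x → y = x * s` along a Cayley edge inside `K` is realised by `(y⁻¹ * x) • x = y`. Walking
along paths from a fixed `x₀ ∈ K`, connectedness gives `k⁻¹ • q = k` for all `k ∈ K`, where
`q = x₀ • x₀`. So `k ↦ k⁻¹ • q` is a bijection `K → K`, i.e. `K` meets every right coset of the
stabilizer `H` of `q` exactly once, and the translates `c * K`, `c ∈ H`, tile `F_n`.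
-/

/-- Two elements of the free group are adjacent in the Cayley graph (standard generators)
if `g⁻¹ * h` is a generator or an inverse of a generator. -/
def FreeGroupAdj (n : ℕ) (g h : FreeGroup (Fin n)) : Prop :=
  ∃ i : Fin n, g⁻¹ * h = FreeGroup.of i ∨ g⁻¹ * h = (FreeGroup.of i)⁻¹

/-- A set `K` is connected if any two of its elements are joined by a path inside `K`. -/
def FreeGroupConnected (n : ℕ) (K : Set (FreeGroup (Fin n))) : Prop :=
  ∀ x ∈ K, ∀ y ∈ K, ∃ l : List (FreeGroup (Fin n)),
    l.Chain' (FreeGroupAdj n) ∧ l.head? = some x ∧ l.getLast? = some y ∧ ∀ z ∈ l, z ∈ K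

open Relation

theorem List.IsChain.reflTransGen_subtype {α : Type*} {r : α → α → Prop} {p : α → Prop}
    {l : List α} (hl : l.IsChain r) (hp : ∀ z ∈ l, p z) {x y : Subtype p}
    (hx : l.head? = some x.1) (hy : l.getLast? = some y.1) :
    ReflTransGen (fun a b : Subtype p => r a b) x y := by
  have hne : l ≠ [] := by rintro rfl; simp at hx
  have := List.relationReflTransGen_of_exists_isChain (l.pmap Subtype.mk hp)
    (List.isChain_pmap_of_isChain (f := Subtype.mk) (S := fun a b : Subtype p => r a b)
      (fun _ _ _ _ h => h) hl hp) (by simpa using hne)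
  convert this using 1
  · ext
    rw [List.head_pmap]
    exact Option.some_injective _ (hx.symm.trans (List.head?_eq_some_head hne))
  · ext
    rw [List.getLast_pmap]
    exact Option.some_injective _ (hy.symm.trans (List.getLast?_eq_some_getLast hne))

section

variable {G : Type*} [Group G]

theorem Subgroup.IsComplement.pairwiseDisjoint_and_iUnion_eq_univ {S T : Set G}
    (h : Subgroup.IsComplement S T) :
    S.PairwiseDisjoint (fun c => (fun t => c * t) '' T) ∧
      ⋃ c ∈ S, (fun t => c * t) '' T = Set.univ := by
  refine ⟨?_, ?_⟩
  · rintro c hc c' hc' hne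
    refine Set.disjoint_left.2 ?_
    rintro _ ⟨t, ht, rfl⟩ ⟨t', ht', heq⟩
    have := h.1 (a₁ := (⟨c', hc'⟩, ⟨t', ht'⟩)) (a₂ := (⟨c, hc⟩, ⟨t, ht⟩)) heq
    exact hne (congrArg (fun x => x.1.1) this).symm
  · refine Set.eq_univ_of_forall fun g => ?_
    obtain ⟨⟨⟨c, hc⟩, ⟨t, ht⟩⟩, rfl⟩ := h.2 g
    exact Set.mem_biUnion hc ⟨t, ht, rfl⟩

theorem isComplement_stabilizer_of_bijective {X : Type*} [MulAction G X] {T : Set G} {q : X}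
    (h : Function.Bijective fun t : T => (t : G)⁻¹ • q) :
    Subgroup.IsComplement (MulAction.stabilizer G q : Set G) T := by
  rw [Subgroup.isComplement_iff_existsUnique_mul_inv_mem]
  intro g
  convert (Function.bijective_iff_existsUnique _).1 h (g⁻¹ • q) using 3 with t
  simp only [SetLike.mem_coe, MulAction.mem_stabilizer_iff, mul_smul, smul_eq_iff_eq_inv_smul]

theorem exists_perm_extending_mul_right (K : Set G) [Finite K] (g : G) :
    ∃ σ : Equiv.Perm K, ∀ x y : K, (x : G) * g = y → σ x = y := by
  classical
  let e : {x : K // (x : G) * g ∈ K} ≃ {y : K // (y : G) * g⁻¹ ∈ K} :=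
    { toFun := fun x => ⟨⟨x.1 * g, x.2⟩, by simp⟩
      invFun := fun y => ⟨⟨y.1 * g⁻¹, y.2⟩, by simp⟩
      left_inv := fun x => by ext; simp
      right_inv := fun y => by ext; simp }
  refine ⟨e.extendSubtype, fun x y hxy => ?_⟩
  have hx : (x : G) * g ∈ K := hxy ▸ y.2
  rw [Equiv.extendSubtype_apply_of_mem e x hx]
  exact Subtype.ext hxy

theorem inv_smul_smul_self_eq_of_reflTransGen {K : Set G} [MulAction G K] {r : K → K → Prop}
    (hstep : ∀ x y : K, r x y → ((y : G)⁻¹ * x) • x = y) {x₀ k : K}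
    (h : ReflTransGen r x₀ k) : (k : G)⁻¹ • (x₀ : G) • x₀ = k := by
  induction h with
  | refl => exact inv_smul_smul _ _
  | @tail y z _ hyz ih =>
    calc (z : G)⁻¹ • (x₀ : G) • x₀ = ((z : G)⁻¹ * y) • (y : G)⁻¹ • (x₀ : G) • x₀ := by
          simp only [smul_smul, mul_assoc, mul_inv_cancel_left]
      _ = z := by rw [ih, hstep y z hyz]

end

theorem exists_monoidHom_perm_of_freeGroupAdj (n : ℕ) (K : Set (FreeGroup (Fin n))) [Finite K] :
    ∃ φ : FreeGroup (Fin n) →* Equiv.Perm K,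
      ∀ x y : K, FreeGroupAdj n x y → φ ((y : FreeGroup (Fin n))⁻¹ * x) x = y := by
  choose σ hσ using fun i : Fin n => exists_perm_extending_mul_right K (FreeGroup.of i)⁻¹
  refine ⟨FreeGroup.lift σ, fun x y ⟨i, hi⟩ => ?_⟩
  have hinv : (y : FreeGroup (Fin n))⁻¹ * x = ((x : FreeGroup (Fin n))⁻¹ * y)⁻¹ := by group
  rcases hi with hi | hi
  · rw [hinv, hi, map_inv, FreeGroup.lift_apply_of, Equiv.Perm.inv_eq_iff_eq]
    exact (hσ i y x (by rw [← hi]; group)).symm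
  · rw [hinv, hi, inv_inv, FreeGroup.lift_apply_of]
    exact hσ i x y (by rw [← hi]; group)

theorem stmt_11_general (n : ℕ) (K : Finset (FreeGroup (Fin n))) (hne : K.Nonempty)
    (hconn : FreeGroupConnected n (K : Set (FreeGroup (Fin n)))) :
    ∃ C : Set (FreeGroup (Fin n)),
      (C.PairwiseDisjoint fun c => (fun s => c * s) '' (K : Set (FreeGroup (Fin n)))) ∧
      ⋃ c ∈ C, (fun s => c * s) '' (K : Set (FreeGroup (Fin n))) = Set.univ := by
  set S : Set (FreeGroup (Fin n)) := ↑K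
  obtain ⟨φ, hφ⟩ := exists_monoidHom_perm_of_freeGroupAdj n S
  let _ : MulAction (FreeGroup (Fin n)) S := MulAction.compHom _ φ
  obtain ⟨x₀, hx₀⟩ := hne
  set q : S := x₀ • ⟨x₀, hx₀⟩
  have hq (k : S) : (k : FreeGroup (Fin n))⁻¹ • q = k := by
    obtain ⟨l, hl, hx, hy, hlK⟩ := hconn x₀ hx₀ k k.2
    exact inv_smul_smul_self_eq_of_reflTransGen hφ
      (hl.reflTransGen_subtype hlK (x := ⟨x₀, hx₀⟩) hx hy)
  have hbij : Function.Bijective fun k : S => (k : FreeGroup (Fin n))⁻¹ • q := by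
    simp only [hq]
    exact Function.bijective_id
  exact ⟨_, (isComplement_stabilizer_of_bijective hbij).pairwiseDisjoint_and_iUnion_eq_univ⟩

theorem stmt_11 (n : ℕ) (hn : 1 ≤ n) (K : Finset (FreeGroup (Fin n))) (hne : K.Nonempty)
    (hconn : FreeGroupConnected n (K : Set (FreeGroup (Fin n)))) :
    ∃ C : Set (FreeGroup (Fin n)),
      (C.PairwiseDisjoint fun c => (fun s => c * s) '' (K : Set (FreeGroup (Fin n)))) ∧
      ⋃ c ∈ C, (fun s => c * s) '' (K : Set (FreeGroup (Fin n))) = Set.univ :=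
  stmt_11_general n K hne hconn
end

section
/- Let k ≥ 2 and r ≥ 2 be integers, let F_k be the free group on k generators, and for g ∈ F_k let |g| denote the length of the reduced word representing g. Let K = {g ∈ F_k : 1 ≤ |g| ≤ r} (the ball of radius r minus the identity), a finite set. Then there exists a function x : F_k → ℂ such that: (i) ∑_{s ∈ K} x(s·g) = 0 for every g ∈ F_k; (ii) x is bounded (there is M ∈ ℝ with |x(g)| ≤ M for all g); and (iii) the range of x is an infinite set (in particular x is nonzero and not periodic). Hence B_r \ {1} is b-arithmetic in F_k but not totally p-arithmetic. -/
/-!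
A character `χ : F_k → S¹` solves `A(K)` as soon as `∑_{s ∈ K} χ s = 0`, because
`∑_{s ∈ K} χ (s g) = χ g · ∑_{s ∈ K} χ s`; it is bounded, and its range is infinite as soon as
some generator is sent to `exp (i θ)` with `θ / π` irrational.

Sorting reduced words by their first letter shows that the sum of `χ` over the sphere of radius
`n` is `Q_n(u)`, where `u = ∑ χ(a^{±1})` over the generators `a` and
`Q_{n+3} = u Q_{n+2} - (2k - 1) Q_{n+1}`. Writing `u = λ + c` with `λ c = 2k - 1`, Binet's formula
at `λ = √(2k-1) exp (i j π / (r + 1))` gives `q ∑_{n=1}^r Q_n(u) = -(q + (-1)^j q^r)` with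
`q = √(2k-1)`, so the sum over `K` changes sign between `j = 1` and `j = 2` and vanishes at some
`|u| ≤ 2q < 2k`. Since `k ≥ 2`, such a `u` is `∑ 2 cos θ_i` with `θ_0 / π` irrational.
-/

open Finset

section SpherePoly

variable {R : Type*} [CommRing R]

def spherePoly (k : ℕ) (u : R) : ℕ → R
  | 0 => 1
  | 1 => u
  | 2 => u ^ 2 - 2 * k
  | n + 3 => u * spherePoly k u (n + 2) - (2 * k - 1) * spherePoly k u (n + 1)

def ballPoly (k r : ℕ) (u : R) : R := ∑ n ∈ Icc 1 r, spherePoly k u n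

lemma map_spherePoly {S : Type*} [CommRing S] (f : R →+* S) (k : ℕ) (u : R) :
    ∀ n, f (spherePoly k u n) = spherePoly k (f u) n
  | 0 | 1 | 2 => by simp [spherePoly, map_ofNat]
  | n + 3 => by
    simp [spherePoly, map_ofNat, map_spherePoly f k u (n + 1), map_spherePoly f k u (n + 2)]

lemma map_ballPoly {S : Type*} [CommRing S] (f : R →+* S) (k r : ℕ) (u : R) :
    f (ballPoly k r u) = ballPoly k r (f u) := by
  simp [ballPoly, map_spherePoly]

lemma continuous_spherePoly (k : ℕ) : ∀ n, Continuous fun u : ℝ => spherePoly k u n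
  | 0 | 1 | 2 => by simp only [spherePoly]; fun_prop
  | n + 3 => by
    have := continuous_spherePoly k (n + 1)
    have := continuous_spherePoly k (n + 2)
    simp only [spherePoly]
    fun_prop

lemma continuous_ballPoly (k r : ℕ) : Continuous (ballPoly k r : ℝ → ℝ) :=
  continuous_finsetSum _ fun n _ => continuous_spherePoly k n

/-- Binet's formula, for the roots `l`, `c` of `X ^ 2 - u * X + (2 * k - 1)`. -/
lemma sub_mul_spherePoly {k : ℕ} {l c : R} (h : l * c = 2 * k - 1) :
    ∀ n, (l - c) * spherePoly k (l + c) (n + 1) = (l ^ 2 - 1) * l ^ n - (c ^ 2 - 1) * c ^ n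
  | 0 => by simp only [spherePoly]; ring
  | 1 => by simp only [spherePoly]; linear_combination (l - c) * h
  | n + 2 => by
    simp only [spherePoly]
    linear_combination (l + c) * sub_mul_spherePoly h (n + 1)
      - (2 * k - 1) * sub_mul_spherePoly h n + ((l ^ 2 - 1) * l ^ n - (c ^ 2 - 1) * c ^ n) * h

lemma sub_mul_ballPoly {k : ℕ} {l c : R} (h : l * c = 2 * k - 1) :
    ∀ r, (l - c) * ballPoly k r (l + c) = (l + 1) * (l ^ r - 1) - (c + 1) * (c ^ r - 1)
  | 0 => by simp [ballPoly]
  | r + 1 => by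
    rw [ballPoly, sum_Icc_succ_top (by omega), mul_add, ← ballPoly, sub_mul_ballPoly h r,
      sub_mul_spherePoly h r]
    ring

end SpherePoly

lemma mul_ballPoly_of_pow_eq_neg_one_pow {K : Type*} [Field K] {k r j : ℕ} {q ζ : K}
    (hq : q ^ 2 = 2 * k - 1) (hq0 : q ≠ 0) (hζ : ζ ^ 2 ≠ 1) (hζr : ζ ^ (r + 1) = (-1) ^ j) :
    q * ballPoly k r (q * (ζ + ζ⁻¹)) = -(q + (-1) ^ j * q ^ r) := by
  have hζ0 : ζ ≠ 0 := by
    rintro rfl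
    exact pow_ne_zero j (neg_ne_zero.2 one_ne_zero : (-1 : K) ≠ 0) (by simpa using hζr.symm)
  have hsub : q * ζ - q * ζ⁻¹ ≠ 0 := by
    rw [← mul_sub]
    refine mul_ne_zero hq0 fun h => hζ ?_
    rw [sub_eq_zero] at h
    field_simp at h
    linear_combination h
  have key := sub_mul_ballPoly (k := k) (l := q * ζ) (c := q * ζ⁻¹)
    (by field_simp; linear_combination hq) r
  have hζ_pow : ζ ^ r = (-1) ^ j * ζ⁻¹ := by
    field_simp; rw [← pow_succ, hζr]
  have hζinv_pow : ζ⁻¹ ^ r = (-1) ^ j * ζ := by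
    rw [inv_pow, hζ_pow, mul_inv, inv_inv, ← inv_pow, inv_neg, inv_one]
  rw [← mul_add, mul_pow, mul_pow, hζ_pow, hζinv_pow] at key
  apply mul_left_cancel₀ hsub
  linear_combination q * key

open Real in
lemma sqrt_mul_ballPoly_cos {k r j : ℕ} (hk : 1 ≤ k) {ψ : ℝ} (hψ0 : 0 < ψ) (hψπ : ψ < π)
    (hj : (r + 1) * ψ = j * π) :
    √(2 * k - 1) * ballPoly k r (2 * √(2 * k - 1) * cos ψ)
      = -(√(2 * k - 1) + (-1) ^ j * √(2 * k - 1) ^ r) := by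
  have hk' : (1 : ℝ) ≤ k := by exact_mod_cast hk
  set q := √(2 * k - 1)
  have hq : q ^ 2 = 2 * k - 1 := sq_sqrt (by linarith)
  have hq0 : q ≠ 0 := (sqrt_pos.2 (by linarith)).ne'
  set ζ := Complex.exp (ψ * Complex.I)
  have hcos : ((2 * q * cos ψ : ℝ) : ℂ) = q * (ζ + ζ⁻¹) := by
    rw [← Complex.exp_neg, ← neg_mul, ← Complex.two_cos]
    push_cast
    ring
  have hζ : ζ ^ 2 ≠ 1 := by
    have him : 0 < ζ.im := by
      rw [Complex.exp_ofReal_mul_I_im]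
      exact sin_pos_of_pos_of_lt_pi hψ0 hψπ
    intro h
    rw [sq, mul_self_eq_one_iff] at h
    rcases h with h | h <;> simp [h] at him
  have hζr : ζ ^ (r + 1) = (-1) ^ j := by
    rw [← Complex.exp_nat_mul, ← Complex.exp_pi_mul_I, ← Complex.exp_nat_mul, ← mul_assoc,
      ← mul_assoc]
    congr 2
    exact_mod_cast hj
  apply Complex.ofReal_injective
  rw [← Complex.ofRealHom_eq_coe, map_mul, map_ballPoly]
  simp only [Complex.ofRealHom_eq_coe]
  rw [hcos]
  push_cast
  exact mul_ballPoly_of_pow_eq_neg_one_pow (by exact_mod_cast hq) (by exact_mod_cast hq0) hζ hζr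

open Real in
lemma exists_ballPoly_eq_zero {k r : ℕ} (hk : 2 ≤ k) (hr : 2 ≤ r) :
    ∃ u : ℝ, ballPoly k r u = 0 ∧ |u| < 2 * k := by
  have hk' : (2 : ℝ) ≤ k := by exact_mod_cast hk
  set q := √(2 * k - 1)
  have hq1 : 1 < q := by rw [lt_sqrt zero_le_one]; linarith
  have hqk : q < k := by rw [sqrt_lt' (by linarith)]; nlinarith
  have hqr : q < q ^ r := by simpa using pow_lt_pow_right₀ hq1 (by omega : 1 < r)
  have hr' : (2 : ℝ) ≤ r := by exact_mod_cast hr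
  set ψ₁ := π / (r + 1)
  set ψ₂ := 2 * π / (r + 1)
  have hψ₁ : 0 < ψ₁ := by positivity
  have hψ₁₂ : ψ₁ < ψ₂ := div_lt_div_of_pos_right (by linarith [pi_pos]) (by positivity)
  have hψ₂ : ψ₂ < π := by rw [div_lt_iff₀ (by positivity)]; nlinarith [pi_pos]
  have hpos : 0 < ballPoly k r (2 * q * cos ψ₁) := by
    have := sqrt_mul_ballPoly_cos (k := k) (r := r) (j := 1) (by omega) hψ₁ (hψ₁₂.trans hψ₂)
      (by simp only [ψ₁]; field_simp; simp)
    refine pos_of_mul_pos_right (a := q) ?_ (by positivity)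
    rw [this]
    linarith [show ((-1 : ℝ) ^ 1) = -1 from pow_one _]
  have hneg : ballPoly k r (2 * q * cos ψ₂) < 0 := by
    have := sqrt_mul_ballPoly_cos (k := k) (r := r) (j := 2) (by omega) (hψ₁.trans hψ₁₂) hψ₂
      (by simp only [ψ₂]; field_simp; push_cast; ring)
    refine neg_of_mul_neg_right (a := q) ?_ (by positivity)
    rw [this]
    nlinarith
  have hcos : 2 * q * cos ψ₂ ≤ 2 * q * cos ψ₁ := by
    gcongr
    exact (cos_lt_cos_of_nonneg_of_le_pi hψ₁.le hψ₂.le hψ₁₂).le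
  obtain ⟨u, ⟨hu₂, hu₁⟩, hu⟩ :=
    intermediate_value_Icc hcos (continuous_ballPoly k r).continuousOn ⟨hneg.le, hpos.le⟩
  refine ⟨u, hu, abs_lt.2 ⟨?_, ?_⟩⟩
  · nlinarith [neg_one_le_cos ψ₂]
  · nlinarith [cos_le_one ψ₁]


namespace FreeGroup

section ReducedWords

variable {α : Type*}

lemma isReduced_cons_iff {a : α × Bool} {L : List (α × Bool)} :
    IsReduced (a :: L) ↔ L.head? ≠ some (a.1, !a.2) ∧ IsReduced L := by
  rcases L with _ | ⟨b, L⟩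
  · simp [IsReduced.singleton, IsReduced.nil]
  · rw [isReduced_cons_cons]
    obtain ⟨x, s⟩ := a
    obtain ⟨y, t⟩ := b
    cases s <;> cases t <;> simp [eq_comm]

lemma norm_mk_of_isReduced [DecidableEq α] {L : List (α × Bool)} (h : IsReduced L) :
    (mk L).norm = L.length := by
  rw [FreeGroup.norm, toWord_mk, h.reduce_eq]

noncomputable def reducedWords (α : Type*) [Finite α] (n : ℕ) : Finset (List (α × Bool)) :=
  ((List.finite_length_eq (α × Bool) n).subset fun _ h => h.1 :
    {L : List (α × Bool) | L.length = n ∧ IsReduced L}.Finite).toFinset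

variable [Finite α]

@[simp]
lemma mem_reducedWords {n : ℕ} {L : List (α × Bool)} :
    L ∈ reducedWords α n ↔ L.length = n ∧ IsReduced L := by
  simp [reducedWords]

lemma reducedWords_zero : reducedWords α 0 = {[]} := by
  ext L
  simp +contextual [List.length_eq_zero_iff, IsReduced.nil]

lemma filter_head_reducedWords_succ [DecidableEq α] (n : ℕ) (a : α × Bool) :
    {L ∈ reducedWords α (n + 1) | L.head? = some a}
      = {L ∈ reducedWords α n | L.head? ≠ some (a.1, !a.2)}.image (a :: ·) := by
  ext L
  rcases L with _ | ⟨b, L⟩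
  · simp
  · simp only [mem_filter, mem_reducedWords, List.length_cons, List.head?_cons, Option.some.injEq,
      mem_image, List.cons.injEq, isReduced_cons_iff]
    constructor
    · rintro ⟨⟨hn, hL⟩, rfl⟩
      exact ⟨L, ⟨⟨by omega, hL.2⟩, hL.1⟩, rfl, rfl⟩
    · rintro ⟨L, ⟨⟨hn, hL⟩, hh⟩, rfl, rfl⟩
      exact ⟨⟨by omega, hh, hL⟩, rfl⟩

end ReducedWords

section SphereSum

variable {α : Type*} {R : Type*} [CommRing R] (χ : FreeGroup α →* R)

lemma map_mk_letter_mul_map_mk_inv_letter (a : α × Bool) :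
    χ (mk [a]) * χ (mk [(a.1, !a.2)]) = 1 := by
  rw [← _root_.map_mul χ, mul_mk, List.singleton_append,
    show mk [a, (a.1, !a.2)] = 1 from Quot.sound Red.Step.cons_not, _root_.map_one]

section Finite

variable [Finite α]

noncomputable def sphereSum (n : ℕ) : R := ∑ L ∈ reducedWords α n, χ (mk L)

lemma sphereSum_zero : sphereSum χ 0 = 1 := by
  simp [sphereSum, reducedWords_zero, ← one_eq_mk]

variable [DecidableEq α]

noncomputable def headSphereSum (n : ℕ) (a : α × Bool) : R :=
  ∑ L ∈ reducedWords α n with L.head? = some a, χ (mk L)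

lemma headSphereSum_zero (a : α × Bool) : headSphereSum χ 0 a = 0 := by
  simp [headSphereSum, reducedWords_zero, filter_singleton]

lemma headSphereSum_succ (n : ℕ) (a : α × Bool) :
    headSphereSum χ (n + 1) a = χ (mk [a]) * (sphereSum χ n - headSphereSum χ n (a.1, !a.2)) := by
  rw [headSphereSum, filter_head_reducedWords_succ, sum_image (by simp), sphereSum,
    headSphereSum, ← sum_filter_not_add_sum_filter (reducedWords α n)
      (fun L => L.head? = some (a.1, !a.2)), add_sub_cancel_right, mul_sum]
  refine sum_congr rfl fun L _ => ?_
  rw [← _root_.map_mul χ, mul_mk, List.singleton_append]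

end Finite

variable [Fintype α] [DecidableEq α]

lemma sum_headSphereSum_succ (n : ℕ) : ∑ a, headSphereSum χ (n + 1) a = sphereSum χ (n + 1) := by
  rw [sphereSum, ← sum_fiberwise (reducedWords α (n + 1)) List.head?, Fintype.sum_option,
    filter_false_of_mem (by simp +contextual [← List.length_eq_zero_iff]), sum_empty, zero_add]
  rfl

lemma sphereSum_add_two (n : ℕ) :
    sphereSum χ (n + 2) = (∑ a, χ (mk [a])) * sphereSum χ (n + 1)
      - 2 * Fintype.card α * sphereSum χ n + ∑ a, headSphereSum χ n a := by
  have (a : α × Bool) : χ (mk [a]) * headSphereSum χ (n + 1) (a.1, !a.2)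
      = sphereSum χ n - headSphereSum χ n a := by
    rw [headSphereSum_succ, ← mul_assoc, map_mk_letter_mul_map_mk_inv_letter, one_mul, Bool.not_not]
  rw [← sum_headSphereSum_succ, sum_congr rfl fun a _ => headSphereSum_succ χ (n + 1) a]
  simp only [mul_sub, this, sum_sub_distrib, ← sum_mul, sum_const, card_univ, Fintype.card_prod,
    Fintype.card_bool, nsmul_eq_mul]
  push_cast
  ring

lemma sphereSum_eq_spherePoly : ∀ n,
    sphereSum χ n = spherePoly (Fintype.card α) (∑ a, χ (mk [a])) n
  | 0 => sphereSum_zero χ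
  | 1 => by
    simp [← sum_headSphereSum_succ, headSphereSum_succ, sphereSum_zero, headSphereSum_zero,
      spherePoly]
  | 2 => by
    rw [sphereSum_add_two, sphereSum_eq_spherePoly 1, sphereSum_zero]
    simp only [headSphereSum_zero, sum_const_zero, spherePoly]
    ring
  | n + 3 => by
    rw [sphereSum_add_two, sum_headSphereSum_succ, sphereSum_eq_spherePoly (n + 1),
      sphereSum_eq_spherePoly (n + 2), spherePoly]
    ring

end SphereSum

lemma sum_coe_lift_circleExp {α : Type*} [Fintype α] (θ : α → ℝ) :
    ∑ a : α × Bool, (lift (fun i => Circle.exp (θ i)) (mk [a]) : ℂ)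
      = ((∑ i, 2 * Real.cos (θ i) : ℝ) : ℂ) := by
  rw [Fintype.sum_prod_type]
  push_cast
  refine sum_congr rfl fun i _ => ?_
  simp [Circle.coe_exp, Complex.two_cos, Complex.exp_neg]

noncomputable def sphere (α : Type*) [Finite α] [DecidableEq α] (n : ℕ) : Finset (FreeGroup α) :=
  (reducedWords α n).image mk

variable {α : Type*} [DecidableEq α] [Finite α]

lemma mem_sphere {n : ℕ} {g : FreeGroup α} : g ∈ sphere α n ↔ g.norm = n := by
  simp only [sphere, mem_image, mem_reducedWords]
  constructor
  · rintro ⟨L, ⟨rfl, hL⟩, rfl⟩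
    exact norm_mk_of_isReduced hL
  · rintro rfl
    exact ⟨g.toWord, ⟨rfl, isReduced_toWord⟩, mk_toWord⟩

lemma sum_sphere {M : Type*} [AddCommMonoid M] (f : FreeGroup α → M) (n : ℕ) :
    ∑ g ∈ sphere α n, f g = ∑ L ∈ reducedWords α n, f (mk L) :=
  sum_image fun L₁ h₁ L₂ h₂ h => by
    rw [← (mem_reducedWords.1 h₁).2.reduce_eq, ← (mem_reducedWords.1 h₂).2.reduce_eq]
    exact reduce.sound h

lemma finsum_punctured_ball_eq_ballPoly [Fintype α] {R : Type*} [CommRing R] (χ : FreeGroup α →* R)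
    (r : ℕ) : ∑ᶠ g ∈ {g : FreeGroup α | 1 ≤ g.norm ∧ g.norm ≤ r}, χ g
      = ballPoly (Fintype.card α) r (∑ a, χ (mk [a])) := by
  have : {g : FreeGroup α | 1 ≤ g.norm ∧ g.norm ≤ r} = ↑((Icc 1 r).biUnion (sphere α)) := by
    ext g
    simp [mem_sphere]
  rw [this, finsum_mem_coe_finset, sum_biUnion, ballPoly]
  · exact sum_congr rfl fun n _ => by rw [sum_sphere, ← sphereSum, sphereSum_eq_spherePoly]
  · exact fun m _ n _ hmn => disjoint_left.2 fun g h₁ h₂ =>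
      hmn ((mem_sphere.1 h₁).symm.trans (mem_sphere.1 h₂))

end FreeGroup

lemma Circle.not_isOfFinOrder_exp {t : ℝ} (ht : Irrational (t / Real.pi)) :
    ¬ IsOfFinOrder (Circle.exp t) := by
  rw [isOfFinOrder_iff_pow_eq_one]
  rintro ⟨n, hn, h⟩
  rw [← Circle.exp_natCast_mul, Circle.exp_eq_one] at h
  obtain ⟨m, hm⟩ := h
  refine ht ⟨2 * m / n, ?_⟩
  have : (n : ℝ) ≠ 0 := by positivity
  push_cast
  field_simp
  linarith

open Real in
lemma exists_sum_two_mul_cos_eq {ι : Type*} [Fintype ι] [DecidableEq ι]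
    (hι : 1 < Fintype.card ι) {u : ℝ} (hu : |u| < 2 * Fintype.card ι) :
    ∃ θ : ι → ℝ, ∑ i, 2 * cos (θ i) = u ∧ ∃ i, Irrational (θ i / π) := by
  obtain ⟨i₀⟩ : Nonempty ι := Fintype.card_pos_iff.1 (by omega)
  have hn : (0 : ℝ) < Fintype.card ι - 1 := by
    have : (1 : ℝ) < Fintype.card ι := by exact_mod_cast hι
    linarith
  set n : ℝ := (Fintype.card ι : ℝ)
  have hn0 : n ≠ 0 := by linarith
  -- for `t ∈ U`, the other `card ι - 1` angles can all be taken equal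
  set U := {t : ℝ | |u - 2 * cos (π * t)| < 2 * (n - 1)}
  have hU : IsOpen U := isOpen_lt (by fun_prop) continuous_const
  have hu' : |u / (2 * n)| < 1 := by
    rw [abs_div, abs_of_pos (by linarith : 0 < 2 * n), div_lt_one (by linarith)]
    exact hu
  have hU₀ : arccos (u / (2 * n)) / π ∈ U := by
    show |u - 2 * cos (π * (arccos (u / (2 * n)) / π))| < 2 * (n - 1)
    rw [mul_div_cancel₀ _ pi_ne_zero, cos_arccos (abs_lt.1 hu').1.le (abs_lt.1 hu').2.le,
      show u - 2 * (u / (2 * n)) = u / (2 * n) * (2 * (n - 1)) by field_simp,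
      abs_mul, abs_of_pos (by linarith : 0 < 2 * (n - 1))]
    exact mul_lt_of_lt_one_left (by linarith) hu'
  obtain ⟨t, ht, htU⟩ := dense_irrational.exists_mem_open hU ⟨_, hU₀⟩
  set c := (u - 2 * cos (π * t)) / (2 * (n - 1))
  have hc : |c| ≤ 1 := by
    rw [abs_div, abs_of_pos (by linarith : 0 < 2 * (n - 1)), div_le_one (by linarith)]
    exact le_of_lt htU
  refine ⟨Function.update (fun _ => arccos c) i₀ (π * t), ?_, i₀, ?_⟩
  · rw [Fintype.sum_eq_add_sum_compl i₀]
    simp (disch := simp_all) only [Function.update_self, Function.update_of_ne]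
    rw [sum_const, card_compl, card_singleton, nsmul_eq_mul,
      cos_arccos (abs_le.1 hc).1 (abs_le.1 hc).2, Nat.cast_pred (by omega)]
    change 2 * cos (π * t) + (n - 1) * (2 * c) = u
    simp only [c]
    field_simp [hn.ne']
    ring
  · simpa [mul_div_cancel_left₀ _ pi_ne_zero] using ht

theorem stmt_13 (k r : ℕ) (hk : 2 ≤ k) (hr : 2 ≤ r) :
    ∃ x : FreeGroup (Fin k) → ℂ,
      (∀ g : FreeGroup (Fin k),
        ∑ᶠ s ∈ {h : FreeGroup (Fin k) | 1 ≤ FreeGroup.norm h ∧ FreeGroup.norm h ≤ r},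
          x (s * g) = 0) ∧
      (∃ M : ℝ, ∀ g : FreeGroup (Fin k), ‖x g‖ ≤ M) ∧
      (Set.range x).Infinite := by
  obtain ⟨u, hu₀, hu⟩ := exists_ballPoly_eq_zero hk hr
  obtain ⟨θ, hθ, i, hθi⟩ := exists_sum_two_mul_cos_eq (ι := Fin k) (by rw [Fintype.card_fin]; omega)
    (by simpa using hu)
  set χ := Circle.coeHom.comp (FreeGroup.lift fun i => Circle.exp (θ i))
  refine ⟨χ, fun g => ?_, ⟨1, fun g => (Circle.norm_coe _).le⟩, ?_⟩
  · simp_rw [map_mul, ← finsum_mem_mul, FreeGroup.finsum_punctured_ball_eq_ballPoly]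
    rw [Fintype.card_fin, show ∑ a, χ (FreeGroup.mk [a]) = _ from
      FreeGroup.sum_coe_lift_circleExp θ, hθ, ← Complex.ofRealHom_eq_coe, ← map_ballPoly, hu₀,
      map_zero, zero_mul]
  · have : Function.Injective fun n : ℕ => ((Circle.exp (θ i) ^ n : Circle) : ℂ) :=
      Circle.coe_injective.comp (injective_pow_iff_not_isOfFinOrder.2
        (Circle.not_isOfFinOrder_exp hθi))
    refine (Set.infinite_range_of_injective this).mono ?_
    rintro _ ⟨n, rfl⟩
    exact ⟨FreeGroup.of i ^ n, by
      simp only [χ, MonoidHom.coe_comp, Function.comp_apply, map_pow, FreeGroup.lift_apply_of]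
      rfl⟩
end

section
/- Let k ≥ 1, let F_k be the free group on k generators, and for g ∈ F_k let |g| denote the length of the reduced word representing g. Let K ⊆ F_k be a finite set such that the number of elements of K of odd reduced word length equals the number of elements of K of even reduced word length. Then the function x : F_k → ℂ defined by x(g) = (−1)^{|g|} satisfies ∑_{s ∈ K} x(s·g) = 0 for every g ∈ F_k, and x is a nonzero bounded function. In particular, such a set K is b-arithmetic in F_k. -/
/-! The sign `x g = (-1) ^ |g|` is the homomorphism `F_k → {±1}` sending every generator to `-1`,
since each letter of the reduced word contributes a factor `-1`. Hence
`∑ s ∈ K, x (s * g) = x g * ∑ s ∈ K, x s`, and the last sum is `#{even} - #{odd} = 0`. -/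

open Finset

theorem Finset.sum_neg_one_pow {ι R : Type*} [Ring R] (s : Finset ι) (f : ι → ℕ) :
    ∑ i ∈ s, (-1 : R) ^ f i = #{i ∈ s | Even (f i)} - #{i ∈ s | Odd (f i)} := by
  rw [← sum_filter_add_sum_filter_not s fun i => Even (f i)]
  simp only [Nat.not_even_iff_odd]
  rw [sum_eq_card_nsmul fun i hi => (mem_filter.1 hi).2.neg_one_pow,
    sum_eq_card_nsmul fun i hi => (mem_filter.1 hi).2.neg_one_pow]
  simp [sub_eq_add_neg]

namespace FreeGroup

variable {α : Type*} [DecidableEq α]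

theorem lift_const_apply_of_inv_eq_self {G : Type*} [Group G] {u : G} (hu : u⁻¹ = u)
    (g : FreeGroup α) : lift (fun _ => u) g = u ^ norm g := by
  conv_lhs => rw [← mk_toWord (x := g)]
  rw [lift_mk, List.prod_eq_pow_card _ u, List.length_map, norm]
  simp only [List.mem_map]
  rintro _ ⟨⟨_, _ | _⟩, _, rfl⟩ <;> simp [hu]

theorem norm_mul_modEq (a b : FreeGroup α) : norm (a * b) ≡ norm a + norm b [MOD 2] := by
  let u : Multiplicative (ZMod 2) := .ofAdd 1
  have hu : u⁻¹ = u := by decide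
  have hparity : ∀ g : FreeGroup α, lift (fun _ => u) g = .ofAdd (norm g : ZMod 2) := fun g => by
    rw [lift_const_apply_of_inv_eq_self hu, ← ofAdd_nsmul, nsmul_one]
  have h := _root_.map_mul (lift fun _ => u) a b
  rw [hparity, hparity, hparity, ← ofAdd_add, ← Nat.cast_add] at h
  exact (ZMod.natCast_eq_natCast_iff _ _ _).1 (Multiplicative.ofAdd.injective h)

theorem neg_one_pow_norm_mul {R : Type*} [Ring R] (a b : FreeGroup α) :
    (-1 : R) ^ norm (a * b) = (-1) ^ norm a * (-1) ^ norm b := by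
  rw [neg_one_pow_eq_pow_mod_two, norm_mul_modEq, ← neg_one_pow_eq_pow_mod_two, pow_add]

end FreeGroup

theorem stmt_14_general (k : ℕ) (K : Finset (FreeGroup (Fin k)))
    (hbal : (K.filter fun g => Odd (FreeGroup.norm g)).card =
      (K.filter fun g => Even (FreeGroup.norm g)).card) :
    (∀ g : FreeGroup (Fin k),
        ∑ s ∈ K, ((-1 : ℂ) ^ FreeGroup.norm (s * g)) = 0) ∧
      (fun g : FreeGroup (Fin k) => ((-1 : ℂ) ^ FreeGroup.norm g)) ≠ 0 ∧
      (∃ M : ℝ, ∀ g : FreeGroup (Fin k),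
        ‖((-1 : ℂ) ^ FreeGroup.norm g)‖ ≤ M) := by
  refine ⟨fun g => ?_, fun h => by simpa using congrFun h 1, 1, fun g => by simp⟩
  simp_rw [FreeGroup.neg_one_pow_norm_mul, ← sum_mul, sum_neg_one_pow, hbal, sub_self, zero_mul]

theorem stmt_14 (k : ℕ) (hk : 1 ≤ k) (K : Finset (FreeGroup (Fin k)))
    (hbal : (K.filter fun g => Odd (FreeGroup.norm g)).card =
      (K.filter fun g => Even (FreeGroup.norm g)).card) :
    (∀ g : FreeGroup (Fin k),
        ∑ s ∈ K, ((-1 : ℂ) ^ FreeGroup.norm (s * g)) = 0) ∧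
      (fun g : FreeGroup (Fin k) => ((-1 : ℂ) ^ FreeGroup.norm g)) ≠ 0 ∧
      (∃ M : ℝ, ∀ g : FreeGroup (Fin k),
        ‖((-1 : ℂ) ^ FreeGroup.norm g)‖ ≤ M) :=
  stmt_14_general k K hbal
end

section
/- Let M be a real number and let x : ℤ → ℝ satisfy x_n + x_{n+1} + x_{n+3} = M for all n ∈ ℤ. If x is bounded (there is C ∈ ℝ with |x_n| ≤ C for all n ∈ ℤ), then x is constant. -/
/- STATEMENT 15: If a doubly infinite real sequence satisfies
`x n + x (n+1) + x (n+3) = M` for all `n ∈ ℤ` and is bounded, then it is constant. -/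
theorem stmt_15 (M : ℝ) (x : ℤ → ℝ)
    (hrec : ∀ n : ℤ, x n + x (n + 1) + x (n + 3) = M)
    (hbdd : ∃ C : ℝ, ∀ n : ℤ, |x n| ≤ C) :
    ∃ c : ℝ, ∀ n : ℤ, x n = c := by
  obtain ⟨C, hC⟩ := hbdd
  -- the real root a of t^3 + t + 1 in (-1, 0)
  obtain ⟨a, haI, ha0⟩ : ∃ a ∈ Set.Icc (-1 : ℝ) 0, a ^ 3 + a + 1 = 0 := by
    have hcont : ContinuousOn (fun t : ℝ => t ^ 3 + t + 1) (Set.Icc (-1) 0) := by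
      fun_prop
    have := intermediate_value_Icc (by norm_num : (-1 : ℝ) ≤ 0) hcont
    have h0 : (0 : ℝ) ∈ Set.Icc ((-1:ℝ) ^ 3 + (-1) + 1) ((0:ℝ) ^ 3 + 0 + 1) := by
      norm_num
    obtain ⟨a, ha, ha'⟩ := this h0
    exact ⟨a, ha, ha'⟩
  obtain ⟨ha1, ha2⟩ := haI
  have ha1' : -1 < a := by
    rcases lt_or_eq_of_le ha1 with h | h
    · exact h
    · exfalso; rw [← h] at ha0; norm_num at ha0
  have ha2' : a < 0 := by
    rcases lt_or_eq_of_le ha2 with h | h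
    · exact h
    · exfalso; rw [h] at ha0; norm_num at ha0
  set q : ℝ := a ^ 2 + 1 with hq
  have hq1 : 1 < q := by nlinarith
  have hq2 : q ≤ 2 := by nlinarith
  set y : ℤ → ℝ := fun n => x n - M / 3 with hy
  have hyrec : ∀ n : ℤ, y (n + 3) = -y n - y (n + 1) := by
    intro n
    have := hrec n
    simp only [hy]
    linarith
  set C' : ℝ := C + |M| / 3 with hC'
  have hyb : ∀ n : ℤ, |y n| ≤ C' := by
    intro n
    simp only [hy]
    calc |x n - M / 3| ≤ |x n| + |M / 3| := abs_sub _ _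
      _ ≤ C + |M| / 3 := by rw [abs_div]; simp; linarith [hC n]
  have hC'0 : 0 ≤ C' := le_trans (abs_nonneg _) (hyb 0)
  -- z satisfies z (n+1) = a * z n
  set z : ℤ → ℝ := fun n => y (n + 2) + a * y (n + 1) + q * y n with hz
  have hzrec : ∀ n : ℤ, z (n + 1) = a * z n := by
    intro n
    simp only [hz]
    have e1 : (n + 1 + 2 : ℤ) = n + 3 := by ring
    have e2 : (n + 1 + 1 : ℤ) = n + 2 := by ring
    rw [e1, e2, hyrec n, hq]
    linear_combination (-(y n)) * ha0
  have hzb : ∀ n : ℤ, |z n| ≤ 4 * C' := by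
    intro n
    simp only [hz]
    have h1 := hyb (n + 2)
    have h2 := hyb (n + 1)
    have h3 := hyb n
    have habs : |a| ≤ 1 := abs_le.mpr ⟨ha1, by linarith⟩
    calc |y (n + 2) + a * y (n + 1) + q * y n|
        ≤ |y (n + 2)| + |a * y (n + 1)| + |q * y n| := by
          exact (abs_add_three _ _ _)
      _ ≤ C' + 1 * C' + 2 * C' := by
          gcongr
          · rw [abs_mul]
            exact mul_le_mul habs h2 (abs_nonneg _) zero_le_one
          · rw [abs_mul]
            have : |q| = q := abs_of_pos (by linarith)
            rw [this]
            exact mul_le_mul hq2 h3 (abs_nonneg _) (by norm_num)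
      _ = 4 * C' := by ring
  have hzpow : ∀ k : ℕ, ∀ n : ℤ, z (n + k) = a ^ k * z n := by
    intro k
    induction k with
    | zero => intro n; simp
    | succ k ih =>
      intro n
      have e : (n + (k + 1 : ℕ) : ℤ) = (n + k) + 1 := by push_cast; ring
      rw [e, hzrec, ih, pow_succ]
      ring
  have habslt : |a| < 1 := abs_lt.mpr ⟨ha1', by linarith⟩
  have hz0 : ∀ n : ℤ, z n = 0 := by
    intro n
    have hb : ∀ k : ℕ, |z n| ≤ |a| ^ k * (4 * C') := by
      intro k
      have e : ((n - k) + k : ℤ) = n := by ring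
      have := hzpow k (n - k)
      rw [e] at this
      rw [this, abs_mul, abs_pow]
      exact mul_le_mul_of_nonneg_left (hzb _) (pow_nonneg (abs_nonneg a) k)
    have hlim : Filter.Tendsto (fun k : ℕ => |a| ^ k * (4 * C')) Filter.atTop (nhds 0) := by
      have := (tendsto_pow_atTop_nhds_zero_of_lt_one (abs_nonneg a) habslt).mul_const (4 * C')
      simpa using this
    have := ge_of_tendsto' hlim hb
    have h0 : |z n| ≤ 0 := this
    exact abs_nonpos_iff.mp h0
  -- now y satisfies the quadratic recurrence
  have hy2 : ∀ n : ℤ, y (n + 2) = -(a * y (n + 1)) - q * y n := by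
    intro n
    have := hz0 n
    simp only [hz] at this
    linarith
  -- the energy
  set E : ℤ → ℝ := fun n => q * y n ^ 2 + a * y n * y (n + 1) + y (n + 1) ^ 2 with hE
  have hErec : ∀ n : ℤ, E (n + 1) = q * E n := by
    intro n
    simp only [hE]
    have e : (n + 1 + 1 : ℤ) = n + 2 := by ring
    rw [e, hy2 n]
    ring
  have hEpow : ∀ k : ℕ, ∀ n : ℤ, E (n + k) = q ^ k * E n := by
    intro k
    induction k with
    | zero => intro n; simp
    | succ k ih =>
      intro n
      have e : (n + (k + 1 : ℕ) : ℤ) = (n + k) + 1 := by push_cast; ring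
      rw [e, hErec, ih, pow_succ]
      ring
  have hEb : ∀ n : ℤ, E n ≤ 4 * C' ^ 2 := by
    intro n
    simp only [hE]
    have h1 := abs_le.mp (hyb n)
    have h2 := abs_le.mp (hyb (n + 1))
    nlinarith [sq_nonneg (y n + y (n + 1)), sq_nonneg (y n - y (n + 1)),
      sq_nonneg a, sq_nonneg (y n), sq_nonneg (y (n + 1))]
  have hEnn : ∀ n : ℤ, 0 ≤ E n := by
    intro n
    simp only [hE]
    nlinarith [sq_nonneg (2 * q * y n + a * y (n + 1)), sq_nonneg (y (n + 1)), sq_nonneg a]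
  have hE0 : ∀ n : ℤ, E n = 0 := by
    intro n
    have hb : ∀ k : ℕ, E n ≤ q⁻¹ ^ k * (4 * C' ^ 2) := by
      intro k
      have := hEpow k n
      have hEb' := hEb (n + k)
      rw [this] at hEb'
      have hqk : (0:ℝ) < q ^ k := pow_pos (by linarith) k
      rw [inv_pow]
      rw [← le_div_iff₀' hqk] at hEb'
      calc E n ≤ 4 * C' ^ 2 / q ^ k := hEb'
        _ = (q ^ k)⁻¹ * (4 * C' ^ 2) := by ring
    have hlim : Filter.Tendsto (fun k : ℕ => q⁻¹ ^ k * (4 * C' ^ 2)) Filter.atTop (nhds 0) := by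
      have hqi : q⁻¹ < 1 := inv_lt_one_of_one_lt₀ hq1
      have := (tendsto_pow_atTop_nhds_zero_of_lt_one
        (inv_nonneg.mpr (by linarith : (0:ℝ) ≤ q)) hqi).mul_const (4 * C' ^ 2)
      simpa using this
    have h0 : E n ≤ 0 := ge_of_tendsto' hlim hb
    linarith [hEnn n]
  -- conclude y = 0
  have hy0 : ∀ n : ℤ, y n = 0 := by
    intro n
    have h1 := hE0 n
    simp only [hE] at h1
    have hv : y (n + 1) = 0 := by
      nlinarith [sq_nonneg (2 * q * y n + a * y (n + 1)), sq_nonneg (y (n + 1)), sq_nonneg a]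
    rw [hv] at h1
    have : y n ^ 2 = 0 := by nlinarith
    exact (pow_eq_zero_iff two_ne_zero).mp this
  refine ⟨M / 3, fun n => ?_⟩
  have := hy0 n
  simp only [hy] at this
  linarith
end

section
/- Let Γ be a group and let x, y ∈ Γ be distinct elements. Then the two-element set {x, y} is a right tile of Γ (i.e. there exists C ⊆ Γ such that the left translates c·{x, y}, c ∈ C, are pairwise disjoint and cover Γ) if and only if the element x⁻¹y either has infinite order or has finite even order. -/
/-- Key combinatorial lemma: there is a set `C` alternating along right
multiplication by `g` iff `g` has infinite order or even order. -/
private lemma aux_alt {Γ : Type*} [Group Γ] (g : Γ) :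
    (∃ C : Set Γ, ∀ a, a ∈ C ↔ a * g ∉ C) ↔
      (¬ IsOfFinOrder g ∨ (IsOfFinOrder g ∧ Even (orderOf g))) := by
  constructor
  · rintro ⟨C, hC⟩
    by_contra hcon
    push_neg at hcon
    obtain ⟨hfin, hodd⟩ := hcon
    have hodd' : ¬ Even (orderOf g) := hodd hfin
    have claim : ∀ m : ℕ, ∀ a : Γ, a * g ^ m ∈ C ↔ (a ∈ C ↔ Even m) := by
      intro m
      induction m with
      | zero => intro a; simp
      | succ n ih =>
        intro a
        have h1 : a * g ^ (n + 1) = (a * g ^ n) * g := by rw [pow_succ, mul_assoc]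
        have h2 : (a * g ^ n) * g ∈ C ↔ a * g ^ n ∉ C := by
          have := hC (a * g ^ n); tauto
        rw [h1, h2, ih a, Nat.even_add_one]
        tauto
    have hn : g ^ orderOf g = 1 := pow_orderOf_eq_one g
    have h := claim (orderOf g) 1
    rw [hn, mul_one] at h
    tauto
  · rintro hg
    set H := Subgroup.zpowers g with hH
    set rep : Γ → Γ := fun a => (QuotientGroup.mk a : Γ ⧸ H).out with hrep
    have hrep_mem : ∀ a : Γ, ∃ k : ℤ, a = rep a * g ^ k := by
      intro a
      have h : (rep a)⁻¹ * a ∈ H := by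
        have h0 := Quotient.mk_out (s := QuotientGroup.leftRel H) a
        exact (QuotientGroup.leftRel_apply).mp h0
      obtain ⟨k, hk⟩ := Subgroup.mem_zpowers_iff.mp h
      exact ⟨k, by rw [hk]; group⟩
    have hrep_g : ∀ a : Γ, rep (a * g) = rep a := by
      intro a
      have h : (QuotientGroup.mk (a * g) : Γ ⧸ H) = QuotientGroup.mk a := by
        rw [QuotientGroup.eq]
        have : (a * g)⁻¹ * a = g⁻¹ := by group
        rw [this]
        exact Subgroup.inv_mem H (Subgroup.mem_zpowers g)
      simp only [hrep, h]
    have parity : ∀ k j : ℤ, g ^ k = g ^ j → (Even k ↔ Even j) := by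
      intro k j hkj
      have h1 : g ^ (k - j) = 1 := by
        rw [zpow_sub, hkj, mul_inv_cancel]
      have h2 : (orderOf g : ℤ) ∣ k - j := orderOf_dvd_iff_zpow_eq_one.mpr h1
      rcases hg with hinf | ⟨_, heven⟩
      · rw [orderOf_eq_zero_iff.mpr hinf] at h2
        norm_num at h2
        have : k = j := by linarith [sub_eq_zero.mp h2]
        rw [this]
      · have hks : Even (k - j) := by
          obtain ⟨m, hm⟩ := heven
          obtain ⟨c, hc⟩ := h2
          exact ⟨m * c, by push_cast [hm] at *; linarith⟩
        exact Int.even_sub.mp hks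
    refine ⟨{a | ∃ k : ℤ, Even k ∧ a = rep a * g ^ k}, ?_⟩
    intro a
    obtain ⟨k₀, hk₀⟩ := hrep_mem a
    have hmema : a ∈ {a | ∃ k : ℤ, Even k ∧ a = rep a * g ^ k} ↔ Even k₀ := by
      constructor
      · rintro ⟨k, hk, hak⟩
        have heq : g ^ k = g ^ k₀ := mul_left_cancel (hak.symm.trans hk₀)
        exact (parity k k₀ heq).mp hk
      · intro h; exact ⟨k₀, h, hk₀⟩
    have hag : a * g = rep (a * g) * g ^ (k₀ + 1) := by
      rw [hrep_g, zpow_add_one, ← mul_assoc, ← hk₀]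
    have hmemag : a * g ∈ {a | ∃ k : ℤ, Even k ∧ a = rep a * g ^ k} ↔ Even (k₀ + 1) := by
      constructor
      · rintro ⟨k, hk, hak⟩
        have heq : g ^ k = g ^ (k₀ + 1) := mul_left_cancel (hak.symm.trans hag)
        exact (parity k (k₀ + 1) heq).mp hk
      · intro h; exact ⟨k₀ + 1, h, hag⟩
    rw [hmema, hmemag, Int.even_add_one]
    tauto

theorem stmt_19 {Γ : Type*} [Group Γ] (x y : Γ) (hxy : x ≠ y) :
    (∃ C : Set Γ, (C.PairwiseDisjoint fun c => (fun s => c * s) '' ({x, y} : Set Γ)) ∧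
        ⋃ c ∈ C, (fun s => c * s) '' ({x, y} : Set Γ) = Set.univ) ↔
      (¬ IsOfFinOrder (x⁻¹ * y) ∨
        (IsOfFinOrder (x⁻¹ * y) ∧ Even (orderOf (x⁻¹ * y)))) := by
  set g := x⁻¹ * y with hg_def
  have hxg : x * g = y := by rw [hg_def]; group
  have himg : ∀ c : Γ, (fun s => c * s) '' ({x, y} : Set Γ) = {c * x, c * y} :=
    fun c => Set.image_pair _ _ _
  rw [← aux_alt g]
  constructor
  · rintro ⟨D, hdisj, hcov⟩
    refine ⟨(fun d => d * x) '' D, ?_⟩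
    have h1 : ∀ a ∈ (fun d => d * x) '' D, a * g ∉ (fun d => d * x) '' D := by
      rintro a ⟨d, hd, rfl⟩ ⟨d', hd', h'⟩
      simp only at h'
      have hdy : d' * x = d * y := by rw [← hxg, ← mul_assoc]; exact h'
      by_cases hdd : d = d'
      · subst hdd
        exact hxy (mul_left_cancel hdy)
      · have hdisj2 := hdisj hd hd' (by exact hdd)
        rw [Function.onFun, himg, himg, Set.disjoint_left] at hdisj2
        exact hdisj2 (a := d * y) (by simp) (by rw [← hdy]; simp)
    have h2 : ∀ a, a ∉ (fun d => d * x) '' D → a * g⁻¹ ∈ (fun d => d * x) '' D := by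
      intro a ha
      have : a ∈ ⋃ c ∈ D, (fun s => c * s) '' ({x, y} : Set Γ) := by
        rw [hcov]; trivial
      rw [Set.mem_iUnion₂] at this
      obtain ⟨d, hd, hmem⟩ := this
      rw [himg] at hmem
      rcases hmem with h | h
      · exact absurd ⟨d, hd, h.symm⟩ ha
      · refine ⟨d, hd, ?_⟩
        simp only
        rw [h, ← hxg]
        group
    intro a
    constructor
    · exact fun ha => h1 a ha
    · intro ha
      have := h2 (a * g) ha
      simpa using this
  · rintro ⟨C, hC⟩
    refine ⟨(fun c => c * x⁻¹) '' C, ?_, ?_⟩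
    · rintro d ⟨c, hc, rfl⟩ d' ⟨c', hc', rfl⟩ hne
      have hcc : c ≠ c' := fun h => hne (by rw [h])
      rw [Function.onFun, himg, himg, Set.disjoint_left]
      have e1 : c * x⁻¹ * x = c := by group
      have e2 : c * x⁻¹ * y = c * g := by rw [← hxg]; group
      have e1' : c' * x⁻¹ * x = c' := by group
      have e2' : c' * x⁻¹ * y = c' * g := by rw [← hxg]; group
      rw [e1, e2, e1', e2']
      intro b hb hb'
      simp only [Set.mem_insert_iff, Set.mem_singleton_iff] at hb hb'
      rcases hb with rfl | rfl <;> rcases hb' with h | h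
      · exact hcc h
      · exact ((hC c').mp hc') (h ▸ hc)
      · exact ((hC c).mp hc) (h ▸ hc')
      · exact hcc (mul_right_cancel h)
    · ext a
      simp only [Set.mem_iUnion, Set.mem_univ, iff_true]
      by_cases ha : a ∈ C
      · refine ⟨a * x⁻¹, ⟨⟨a, ha, rfl⟩, ?_⟩⟩
        rw [himg]
        left
        group
      · have h1 : a * g⁻¹ ∈ C := by
          by_contra h
          have := (hC (a * g⁻¹)).mpr
          simp only [inv_mul_cancel_right] at this
          exact h (this ha)
        refine ⟨a * g⁻¹ * x⁻¹, ⟨⟨a * g⁻¹, h1, rfl⟩, ?_⟩⟩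
        rw [himg]
        right
        rw [← hxg]
        show a ∈ {a * g⁻¹ * x⁻¹ * (x * g)}
        rw [show a * g⁻¹ * x⁻¹ * (x * g) = a by group]
        rfl
end
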